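/- arXiv:0905.4698 — 8 statements merged into one kernel-verified Lean document; each statement's English description precedes it below -/
import Mathlib

section
/- Fix n ≥ 1 and a ≥ 1, and let P_a be the n×n matrix defined below. Then P_a is cross-symmetric: P_a(i,j) = P_a(n−i+1, n−j+1) for all 1 ≤ i, j ≤ n. -/
/-!
Numbering the `a` piles from the other end, `k ↦ a + 1 - k`, exchanges the factors `k` and
`a - k + 1`, as well as `a - k` and `k - 1`. Together with `(r, s) ↦ (q - s, p - r)`, which swaps
the cards above and below the followed card, and `choose_symm`, this maps the terms of `P_a(i,j)`
bijectively onto those of `P_a(n-i+1, n-j+1)`.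
-/

/-- The transition matrix following a single card through a GSR `a`-shuffle of an `n`-card
deck: `P_a(i,j)` (with `1`-based positions `i.val+1`, `j.val+1`) is the chance that the card
at position `i` moves to position `j`. -/
def singleCardMatrix (n a : ℕ) : Matrix (Fin n) (Fin n) ℚ := fun i j =>
  ((∑ k ∈ Finset.Icc 1 a,
      ∑ r ∈ Finset.Icc ((i.val + 1) + (j.val + 1) - (n + 1)) (min i.val j.val),
        Nat.choose j.val r * Nat.choose (n - (j.val + 1)) (i.val - r) * k ^ r *
          (a - k) ^ (j.val - r) * (k - 1) ^ (i.val - r) *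
          (a - k + 1) ^ ((n - (j.val + 1)) - (i.val - r)) : ℕ) : ℚ) / (a : ℚ) ^ n

open Finset

/-- The summand of `singleCardMatrix n a i j` is `singleCardWeight a j (n - 1 - j) k r (i - r)`. -/
def singleCardWeight (a p q k r s : ℕ) : ℕ :=
  p.choose r * q.choose s * k ^ r * (a - k) ^ (p - r) * (k - 1) ^ s * (a - k + 1) ^ (q - s)

lemma singleCardWeight_reflect {a p q k r s : ℕ} (hk : 1 ≤ k) (hka : k ≤ a) (hr : r ≤ p)
    (hs : s ≤ q) :
    singleCardWeight a p q k r s = singleCardWeight a q p (a + 1 - k) (q - s) (p - r) := by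
  have h₁ : a + 1 - k = a - k + 1 := by omega
  have h₂ : a - (a + 1 - k) = k - 1 := by omega
  have h₃ : a + 1 - k - 1 = a - k := by omega
  have h₄ : a - (a + 1 - k) + 1 = k := by omega
  rw [singleCardWeight, singleCardWeight, h₄, h₂, h₃, h₁, Nat.sub_sub_self hr,
    Nat.sub_sub_self hs, Nat.choose_symm hr, Nat.choose_symm hs]
  ring

def singleCardSum (a p q i : ℕ) : ℕ :=
  ∑ k ∈ Icc 1 a, ∑ r ∈ Icc (i - q) (min i p), singleCardWeight a p q k r (i - r)

lemma singleCardSum_reflect {a p q i : ℕ} (hi : i ≤ p + q) :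
    singleCardSum a p q i = singleCardSum a q p (p + q - i) := by
  unfold singleCardSum
  rw [← sum_product', ← sum_product']
  refine sum_nbij' (fun x ↦ (a + 1 - x.1, q - (i - x.2)))
    (fun x ↦ (a + 1 - x.1, p - (p + q - i - x.2))) ?_ ?_ ?_ ?_ ?_ <;>
    rintro ⟨k, r⟩ h <;> simp only [mem_product, mem_Icc, Prod.ext_iff] at h ⊢
  on_goal 5 =>
    rw [singleCardWeight_reflect (by omega) (by omega) (by omega) (by omega)]
    congr 1
  all_goals omega

lemma singleCardMatrix_apply (n a : ℕ) (i j : Fin n) :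
    singleCardMatrix n a i j = singleCardSum a j (n - (j + 1)) i / (a : ℚ) ^ n := by
  have h : (i : ℕ) + 1 + (j + 1) - (n + 1) = i - (n - (j + 1)) := by omega
  simp only [singleCardMatrix, singleCardSum, singleCardWeight, h]

theorem singleCardMatrix_cross_symmetric_general (n a : ℕ)
    (i j : Fin n) :
    singleCardMatrix n a i j = singleCardMatrix n a i.rev j.rev := by
  have hp : (j : ℕ) + (n - (j + 1)) = n - 1 := by omega
  have hq : n - (n - (j + 1) + 1) = j := by omega
  rw [singleCardMatrix_apply, singleCardMatrix_apply, singleCardSum_reflect (by omega), hp,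
    Fin.val_rev, Fin.val_rev, hq, show n - 1 - i = n - (i + 1) by omega]

/-- The single-card transition matrix is cross-symmetric:
`P_a(i,j) = P_a(n-i+1, n-j+1)`. -/
theorem singleCardMatrix_cross_symmetric (n a : ℕ) (hn : 1 ≤ n) (ha : 1 ≤ a)
    (i j : Fin n) :
    singleCardMatrix n a i j = singleCardMatrix n a i.rev j.rev :=
  singleCardMatrix_cross_symmetric_general n a i j
end

section
/- Fix n ≥ 1 and a, b ≥ 1, and let P_a, P_b, P_{ab} be the n×n matrices defined below. Then the matrices are multiplicative: the matrix product satisfies P_a · P_b = P_{ab}, i.e. ∑_{k=1}^{n} P_a(i,k)·P_b(k,j) = P_{ab}(i,j) for all 1 ≤ i, j ≤ n. -/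
/-!
A GSR `a`-shuffle of an `n`-card deck is encoded by a digit word `g : Fin n → Fin a`, all `a ^ n`
words being equally likely: the shuffled deck is the deck stably sorted by `g`, i.e. `Tuple.sort g`.
Hence `P_a` is `a⁻ⁿ` times the matrix counting the words `g` with `Tuple.sort g i = j`.

An `a`-shuffle with digits `g` followed by a `b`-shuffle with digits `h` is the `ab`-shuffle whose
digit at card `m` is the pair (digit of `h` at the new position of `m`, `g m`), ordered
lexicographically. This is a bijection between pairs of words and words, so the count matrices
multiply.

The closed formula for the counts comes from a generating function: if card `j` has digit `v`, its
new position is the number of earlier cards with digit `≤ v` plus the number of later cards with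
digit `< v`, so `∑_g X ^ (new position of j) = ∑_v ((v+1) X + a-1-v) ^ j (v X + a-v) ^ (n-1-j)`,
whose coefficients are the double sums defining `P_a`.
-/

open Finset Polynomial

theorem strictMono_finProdFinEquiv {m n : ℕ} :
    StrictMono fun x : Fin m ×ₗ Fin n => finProdFinEquiv (ofLex x) := by
  intro x y h
  rw [Prod.Lex.lt_iff, Fin.lt_def, Fin.lt_def, ← Fin.val_inj] at h
  rw [Fin.lt_def, finProdFinEquiv_apply_val, finProdFinEquiv_apply_val]
  rcases h with h | ⟨h, h'⟩
  · have : n * ((ofLex x).1 + 1) ≤ n * (ofLex y).1 := Nat.mul_le_mul_left n h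
    nlinarith [(ofLex x).2.isLt]
  · rw [h]; omega

namespace Tuple

variable {n : ℕ} {α : Type*} [LinearOrder α]

theorem strictMono_toLex_sort (f : Fin n → α) :
    StrictMono fun i => toLex (f (sort f i), sort f i) :=
  eq_sort_iff'.1 rfl

theorem card_toLex_lt_eq_sort_symm (f : Fin n → α) (i : Fin n) :
    #{m | toLex (f m, m) < toLex (f i, i)} = (sort f).symm i := by
  calc #{m | toLex (f m, m) < toLex (f i, i)}
      = #{k | toLex (f (sort f k), sort f k) <
          toLex (f (sort f ((sort f).symm i)), sort f ((sort f).symm i))} :=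
        card_equiv (sort f).symm fun m => by simp
    _ = #{k | k < (sort f).symm i} := by simp only [(strictMono_toLex_sort f).lt_iff_lt]
    _ = (sort f).symm i := by rw [filter_gt_eq_Iio, Fin.card_Iio]

end Tuple

section ComposeDigits

variable {n a b : ℕ}

def composeDigits (g : Fin n → Fin a) (h : Fin n → Fin b) : Fin n → Fin (b * a) :=
  fun m => finProdFinEquiv (h ((Tuple.sort g).symm m), g m)

theorem sort_composeDigits (g : Fin n → Fin a) (h : Fin n → Fin b) :
    Tuple.sort (composeDigits g h) = Tuple.sort g * Tuple.sort h := by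
  refine (Tuple.eq_sort_iff'.2 fun i j hij => ?_).symm
  show toLex (composeDigits g h (Tuple.sort g (Tuple.sort h i)), Tuple.sort g (Tuple.sort h i)) <
    toLex (composeDigits g h (Tuple.sort g (Tuple.sort h j)), Tuple.sort g (Tuple.sort h j))
  simp only [composeDigits, Equiv.symm_apply_apply, Prod.Lex.toLex_lt_toLex]
  have hD {x y : Fin b × Fin a} (hxy : toLex x < toLex y) :
      finProdFinEquiv x < finProdFinEquiv y :=
    strictMono_finProdFinEquiv hxy
  rcases Prod.Lex.toLex_lt_toLex.1 (Tuple.strictMono_toLex_sort h hij) with hlt | ⟨heq, hlt⟩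
  · exact Or.inl (hD (Prod.Lex.toLex_lt_toLex.2 (Or.inl hlt)))
  · rcases Prod.Lex.toLex_lt_toLex.1 (Tuple.strictMono_toLex_sort g hlt) with
      hlt' | ⟨heq', hlt'⟩
    · exact Or.inl (hD (Prod.Lex.toLex_lt_toLex.2 (Or.inr ⟨heq, hlt'⟩)))
    · exact Or.inr ⟨by simp only at heq heq'; rw [heq, heq'], hlt'⟩

theorem composeDigits_bijective :
    Function.Bijective fun p : (Fin n → Fin a) × (Fin n → Fin b) => composeDigits p.1 p.2 := by
  refine (Fintype.bijective_iff_injective_and_card _).2 ⟨?_, by simp [mul_pow, mul_comm]⟩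
  rintro ⟨g, h⟩ ⟨g', h'⟩ hgh
  have hpair m : (h ((Tuple.sort g).symm m), g m) = (h' ((Tuple.sort g').symm m), g' m) :=
    finProdFinEquiv.injective (congr_fun hgh m)
  obtain rfl : g = g' := funext fun m => (Prod.ext_iff.1 (hpair m)).2
  refine Prod.ext rfl (funext fun k => ?_)
  simpa using (Prod.ext_iff.1 (hpair (Tuple.sort g k))).1

end ComposeDigits

/-- `Tuple.sort g i = j` says that the `a`-shuffle with digits `g` moves the card at position `j`
to position `i`. -/
def shuffleCount (n a : ℕ) : Matrix (Fin n) (Fin n) ℕ :=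
  Matrix.of fun i j => #{g : Fin n → Fin a | Tuple.sort g i = j}

theorem shuffleCount_mul {n : ℕ} (a b : ℕ) :
    shuffleCount n (a * b) = shuffleCount n a * shuffleCount n b := by
  ext i j
  calc #{D : Fin n → Fin (a * b) | Tuple.sort D i = j}
      = #{p : (Fin n → Fin b) × (Fin n → Fin a) | Tuple.sort p.1 (Tuple.sort p.2 i) = j} :=
        (card_equiv (Equiv.ofBijective _ composeDigits_bijective) (by
          simp [sort_composeDigits])).symm
    _ = ∑ k, #{p : (Fin n → Fin b) × (Fin n → Fin a) |
          Tuple.sort p.1 k = j ∧ Tuple.sort p.2 i = k} := by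
        rw [card_eq_sum_card_fiberwise (f := fun p => Tuple.sort p.2 i) (t := univ) (by simp)]
        refine sum_congr rfl fun k _ => ?_
        rw [filter_filter]
        exact congrArg card (filter_congr fun p _ => and_congr_left fun hk => by rw [hk])
    _ = ∑ k, shuffleCount n a i k * shuffleCount n b k j := by
        refine sum_congr rfl fun k _ => ?_
        rw [← univ_product_univ, filter_product (fun g : Fin n → Fin b => Tuple.sort g k = j)
          (fun h : Fin n → Fin a => Tuple.sort h i = k), card_product, mul_comm]
        rfl

theorem coeff_C_mul_X_add_C_pow {R : Type*} [CommSemiring R] (p q : R) (s r : ℕ) :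
    ((C p * X + C q) ^ s).coeff r = s.choose r * p ^ r * q ^ (s - r) := by
  have hterm (m : ℕ) : (C p * X) ^ m * C q ^ (s - m) * (s.choose m : R[X]) =
      C (s.choose m * p ^ m * q ^ (s - m)) * X ^ m := by
    simp only [mul_pow, ← C_pow, map_mul, map_natCast]; ring
  simp only [add_pow, hterm, finsetSum_coeff, coeff_C_mul_X_pow]
  rw [sum_ite_eq]
  split_ifs with hr
  · rfl
  · rw [Nat.choose_eq_zero_of_lt (by simpa using hr)]; simp

theorem coeff_C_mul_X_add_C_pow_mul_C_mul_X_add_C_pow {R : Type*} [CommSemiring R]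
    (p q p' q' : R) (s t i : ℕ) :
    ((C p * X + C q) ^ s * (C p' * X + C q') ^ t).coeff i =
      ∑ r ∈ Icc (i - t) (min i s), s.choose r * t.choose (i - r) *
        p ^ r * q ^ (s - r) * p' ^ (i - r) * q' ^ (t - (i - r)) := by
  rw [coeff_mul, Nat.sum_antidiagonal_eq_sum_range_succ_mk]
  simp only [coeff_C_mul_X_add_C_pow]
  refine (sum_subset (fun r hr => ?_) fun r hi hr => ?_).symm.trans
    (sum_congr rfl fun r _ => by ring)
  · simp only [mem_Icc, mem_range] at hr ⊢
    omega
  · simp only [mem_Icc, mem_range, not_and_or, not_le] at hi hr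
    rcases hr with hr | hr
    · rw [Nat.choose_eq_zero_of_lt (show t < i - r by omega)]; simp
    · rw [Nat.choose_eq_zero_of_lt (show s < r by omega)]; simp

theorem prod_ite_lt_ite_gt {M : Type*} [CommMonoid M] {n : ℕ} (A B : M) (s : Fin n) :
    ∏ m, (if m < s then A else if s < m then B else 1) = A ^ (s : ℕ) * B ^ (n - (s + 1)) := by
  rw [prod_ite, prod_const, filter_gt_eq_Iio, Fin.card_Iio, ← prod_filter, filter_filter,
    prod_const]
  congr 2
  rw [filter_congr fun m _ => and_iff_right_of_imp fun h => not_lt_of_gt h, filter_lt_eq_Ioi,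
    Fin.card_Ioi]
  omega

theorem sum_ite_X_one {ι : Type*} [Fintype ι] (p : ι → Prop) [DecidablePred p] :
    ∑ c, (if p c then (X : ℕ[X]) else 1) = C #{c | p c} * X + C (Fintype.card ι - #{c | p c}) := by
  have hcompl : Fintype.card ι - #{c | p c} = #{c | ¬ p c} := by
    rw [← card_univ, ← card_filter_add_card_filter_not (s := univ) p, Nat.add_sub_cancel_left]
  rw [hcompl, sum_ite, sum_const, sum_const]
  simp [nsmul_eq_mul]

theorem sum_X_pow_card_toLex_lt {n : ℕ} (a : ℕ) (s : Fin n) :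
    ∑ g : Fin n → Fin a, (X : ℕ[X]) ^ #{m | toLex (g m, m) < toLex (g s, s)} =
      ∑ k ∈ Icc 1 a, (C k * X + C (a - k)) ^ (s : ℕ) *
        (C (k - 1) * X + C (a - k + 1)) ^ (n - (s + 1)) := by
  -- `∏ m, F v m (g m)` is `X ^ #{m | toLex (g m, m) < toLex (g s, s)}` if `g s = v`, else `0`.
  let F : Fin a → Fin n → Fin a → ℕ[X] := fun v m c =>
    if m = s then (if c = v then 1 else 0) else if toLex (c, m) < toLex (v, s) then X else 1
  have hsplit (g : Fin n → Fin a) :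
      X ^ #{m | toLex (g m, m) < toLex (g s, s)} = ∑ v, ∏ m, F v m (g m) := by
    rw [sum_eq_single (g s) (fun v _ hv => prod_eq_zero (mem_univ s) (by simp [F, Ne.symm hv]))
      (by simp), ← prod_const, prod_filter]
    refine prod_congr rfl fun m _ => ?_
    by_cases hm : m = s <;> simp [F, hm]
  have hfactor (v : Fin a) (m : Fin n) : ∑ c, F v m c =
      if m < s then C ((v : ℕ) + 1) * X + C (a - (v + 1))
      else if s < m then C (v : ℕ) * X + C (a - v) else 1 := by
    rcases lt_trichotomy m s with hms | rfl | hsm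
    · have hlt (c : Fin a) : toLex (c, m) < toLex (v, s) ↔ c ≤ v := by
        simp [Prod.Lex.toLex_lt_toLex, hms, le_iff_lt_or_eq]
      simp only [F, hms.ne, if_false, hlt, sum_ite_X_one, filter_ge_eq_Iic, Fin.card_Iic,
        Fintype.card_fin, if_pos hms]
    · simp [F]
    · have hlt (c : Fin a) : toLex (c, m) < toLex (v, s) ↔ c < v := by
        simp [Prod.Lex.toLex_lt_toLex, hsm.not_gt]
      simp only [F, hsm.ne', if_false, hlt, sum_ite_X_one, filter_gt_eq_Iio, Fin.card_Iio,
        Fintype.card_fin, if_neg hsm.not_gt, if_pos hsm]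
  calc ∑ g : Fin n → Fin a, (X : ℕ[X]) ^ #{m | toLex (g m, m) < toLex (g s, s)}
      = ∑ v, ∏ m, ∑ c, F v m c := by simp only [hsplit, Fintype.prod_sum]; exact sum_comm
    _ = ∑ v : Fin a, (C ((v : ℕ) + 1) * X + C (a - (v + 1))) ^ (s : ℕ) *
          (C (v : ℕ) * X + C (a - v)) ^ (n - (s + 1)) := by
        simp only [hfactor, prod_ite_lt_ite_gt]
    _ = ∑ v ∈ range a, (C (1 + v) * X + C (a - (1 + v))) ^ (s : ℕ) *
          (C (1 + v - 1) * X + C (a - (1 + v) + 1)) ^ (n - (s + 1)) := by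
        rw [← Fin.sum_univ_eq_sum_range]
        refine sum_congr rfl fun v _ => ?_
        have hv : a - (1 + v) + 1 = a - v := by omega
        rw [hv, Nat.add_sub_cancel_left, add_comm 1]
    _ = _ := by rw [← Ico_add_one_right_eq_Icc, sum_Ico_eq_sum_range, Nat.add_sub_cancel]

theorem shuffleCount_apply (n a : ℕ) (i j : Fin n) :
    shuffleCount n a i j = ∑ k ∈ Icc 1 a,
      ∑ r ∈ Icc ((i.val + 1) + (j.val + 1) - (n + 1)) (min i.val j.val),
        Nat.choose j.val r * Nat.choose (n - (j.val + 1)) (i.val - r) * k ^ r *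
          (a - k) ^ (j.val - r) * (k - 1) ^ (i.val - r) *
          (a - k + 1) ^ ((n - (j.val + 1)) - (i.val - r)) := by
  have hcoeff : shuffleCount n a i j =
      (∑ g : Fin n → Fin a, (X : ℕ[X]) ^ #{m | toLex (g m, m) < toLex (g j, j)}).coeff i := by
    simp only [finsetSum_coeff, coeff_X_pow, Tuple.card_toLex_lt_eq_sort_symm, sum_boole,
      Nat.cast_id, Fin.val_inj, eq_comm (a := i), Equiv.symm_apply_eq]
    exact congrArg card (filter_congr fun g _ => eq_comm)
  rw [hcoeff, sum_X_pow_card_toLex_lt, finsetSum_coeff]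
  refine sum_congr rfl fun k _ => ?_
  rw [coeff_C_mul_X_add_C_pow_mul_C_mul_X_add_C_pow,
    show (i : ℕ) - (n - (j + 1)) = (i + 1) + (j + 1) - (n + 1) by omega]
  simp only [Nat.cast_id]

theorem singleCardMatrix_eq_smul (n a : ℕ) :
    singleCardMatrix n a = ((a : ℚ) ^ n)⁻¹ • (Nat.castRingHom ℚ).mapMatrix (shuffleCount n a) := by
  ext i j
  simp [singleCardMatrix, shuffleCount_apply, div_eq_inv_mul]

theorem singleCardMatrix_mul_general (n a b : ℕ) :
    singleCardMatrix n a * singleCardMatrix n b = singleCardMatrix n (a * b) := by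
  rw [singleCardMatrix_eq_smul, singleCardMatrix_eq_smul, singleCardMatrix_eq_smul,
    shuffleCount_mul, map_mul, smul_mul_smul_comm, Nat.cast_mul, mul_pow, mul_inv]

/-- The single-card transition matrices are multiplicative: `P_a · P_b = P_{ab}`. -/
theorem singleCardMatrix_mul (n a b : ℕ) (hn : 1 ≤ n) (ha : 1 ≤ a) (hb : 1 ≤ b) :
    singleCardMatrix n a * singleCardMatrix n b = singleCardMatrix n (a * b) :=
  singleCardMatrix_mul_general n a b
end

section
/- Fix n ≥ 2 and a ≥ 2, and set α = 1 − 1/a. For each 1 ≤ i ≤ n, the quantity Q_a(i) = a^{−n} ∑_{k=1}^{a} (k−1)^{n−i} k^{i−1} (the probability that the bottom card of an n-card deck is at position i from the top after a GSR a-shuffle) satisfies (1/a)·α^{n−i+1}/(1−α^n) ≤ Q_a(i) ≤ (1/a)·α^{n−i}/(1−α^{n−1}). -/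
/-!
Put `α = 1 - 1/a`, so that `k - 1 ≤ α k` for `1 ≤ k ≤ a`, with equality at `k = a`. Termwise
this gives `(k-1)^m k^p ≤ α^m k^(m+p)` and
`(1 - α^e) k^e ≤ k^e - (k-1)^e ≤ (1 + α + ⋯ + α^(e-1)) k^(e-1)`; summing the latter against the
telescoping identity `∑ (k^e - (k-1)^e) = a^e` bounds the power sum `∑ k^(n-1)` between
`a^(n-1)/(1-α^n)` and `a^(n-1)/(1-α^(n-1))`, which yields the upper bound.
For the lower bound `∑ (k-1)^m k^p ≥ α^(m+1) ∑ k^(m+p)`: at `p = 0` it is the lower estimate of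
the power sum, and since `(k-1)/k` increases with `k`, the difference `(k-1)^m - α^(m+1) k^m`
changes sign once, from negative to nonnegative, so weighting it by the increasing `k^p` keeps
its sum nonnegative.
-/

open Finset

noncomputable def shuffleRatio (a : ℕ) : ℝ := 1 - 1 / a

theorem shuffleRatio_nonneg (a : ℕ) : 0 ≤ shuffleRatio a := by
  unfold shuffleRatio
  rw [one_div, sub_nonneg]
  exact Nat.cast_inv_le_one a

theorem shuffleRatio_lt_one {a : ℕ} (ha : 0 < a) : shuffleRatio a < 1 := by
  unfold shuffleRatio
  have : 0 < 1 / (a : ℝ) := by positivity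
  linarith

theorem shuffleRatio_mul_self {a : ℕ} (ha : 0 < a) : shuffleRatio a * a = a - 1 := by
  unfold shuffleRatio
  field_simp

theorem sub_one_le_shuffleRatio_mul {a k : ℕ} (hk : k ≤ a) :
    (k : ℝ) - 1 ≤ shuffleRatio a * k := by
  have : (k : ℝ) / a ≤ 1 := div_le_one_of_le₀ (by exact_mod_cast hk) (Nat.cast_nonneg a)
  have : shuffleRatio a * k = k - k / a := by unfold shuffleRatio; ring
  linarith

theorem sub_one_pow_le_shuffleRatio_pow_mul {a k : ℕ} (hk : k ∈ Icc 1 a) (e : ℕ) :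
    ((k : ℝ) - 1) ^ e ≤ shuffleRatio a ^ e * (k : ℝ) ^ e := by
  obtain ⟨hk1, hka⟩ := mem_Icc.mp hk
  rw [← mul_pow]
  exact pow_le_pow_left₀ (sub_nonneg.mpr (by exact_mod_cast hk1))
    (sub_one_le_shuffleRatio_mul hka) e

theorem geom_sum_shuffleRatio {a : ℕ} (ha : 0 < a) (e : ℕ) :
    ∑ j ∈ range e, shuffleRatio a ^ j = a * (1 - shuffleRatio a ^ e) := by
  have h := geom_sum_mul (shuffleRatio a) e
  have hα : (shuffleRatio a - 1) * a = -1 := by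
    rw [sub_mul, shuffleRatio_mul_self ha]; ring
  linear_combination (-(a : ℝ)) * h + (∑ j ∈ range e, shuffleRatio a ^ j) * hα

theorem sum_Icc_pow_sub_sub_one_pow (a e : ℕ) :
    ∑ k ∈ Icc 1 a, ((k : ℝ) ^ e - ((k : ℝ) - 1) ^ e) = (a : ℝ) ^ e - 0 ^ e := by
  induction a with
  | zero => simp
  | succ a ih =>
    rw [sum_Icc_succ_top (by omega), ih]
    push_cast
    ring

theorem pow_succ_sub_sub_one_pow_succ_le {a k : ℕ} (ha : 0 < a) (hk : k ∈ Icc 1 a) (d : ℕ) :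
    (k : ℝ) ^ (d + 1) - ((k : ℝ) - 1) ^ (d + 1)
      ≤ a * (1 - shuffleRatio a ^ (d + 1)) * (k : ℝ) ^ d := by
  have hexpand : (k : ℝ) ^ (d + 1) - ((k : ℝ) - 1) ^ (d + 1)
      = ∑ j ∈ range (d + 1), ((k : ℝ) - 1) ^ j * (k : ℝ) ^ (d - j) := by
    have h := geom_sum₂_mul ((k : ℝ) - 1) k (d + 1)
    simp only [Nat.add_sub_cancel, sub_sub_cancel_left] at h
    linear_combination h
  rw [hexpand, ← geom_sum_shuffleRatio ha, sum_mul]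
  refine sum_le_sum fun j hj => ?_
  calc ((k : ℝ) - 1) ^ j * (k : ℝ) ^ (d - j)
      ≤ shuffleRatio a ^ j * (k : ℝ) ^ j * (k : ℝ) ^ (d - j) := by
        gcongr; exact sub_one_pow_le_shuffleRatio_pow_mul hk j
    _ = shuffleRatio a ^ j * (k : ℝ) ^ d := by
        rw [mul_assoc, ← pow_add, Nat.add_sub_cancel' (Nat.lt_succ_iff.mp (mem_range.mp hj))]

theorem pow_le_one_sub_shuffleRatio_pow_mul_sum_pow {a : ℕ} (ha : 0 < a) (d : ℕ) :
    (a : ℝ) ^ d ≤ (1 - shuffleRatio a ^ (d + 1)) * ∑ k ∈ Icc 1 a, (k : ℝ) ^ d := by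
  have hA : (0 : ℝ) < a := by exact_mod_cast ha
  refine le_of_mul_le_mul_left ?_ hA
  calc (a : ℝ) * (a : ℝ) ^ d = ∑ k ∈ Icc 1 a, ((k : ℝ) ^ (d + 1) - ((k : ℝ) - 1) ^ (d + 1)) := by
        rw [sum_Icc_pow_sub_sub_one_pow]; ring
    _ ≤ ∑ k ∈ Icc 1 a, a * (1 - shuffleRatio a ^ (d + 1)) * (k : ℝ) ^ d :=
        sum_le_sum fun k hk => pow_succ_sub_sub_one_pow_succ_le ha hk d
    _ = a * ((1 - shuffleRatio a ^ (d + 1)) * ∑ k ∈ Icc 1 a, (k : ℝ) ^ d) := by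
        rw [mul_sum, mul_sum]; simp only [mul_assoc]

theorem one_sub_shuffleRatio_pow_mul_sum_pow_le (a e : ℕ) :
    (1 - shuffleRatio a ^ e) * ∑ k ∈ Icc 1 a, (k : ℝ) ^ e ≤ (a : ℝ) ^ e :=
  calc (1 - shuffleRatio a ^ e) * ∑ k ∈ Icc 1 a, (k : ℝ) ^ e
      = ∑ k ∈ Icc 1 a, ((k : ℝ) ^ e - shuffleRatio a ^ e * (k : ℝ) ^ e) := by
        rw [mul_sum]; exact sum_congr rfl fun _ _ => by ring
    _ ≤ ∑ k ∈ Icc 1 a, ((k : ℝ) ^ e - ((k : ℝ) - 1) ^ e) :=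
        sum_le_sum fun k hk => sub_le_sub_left (sub_one_pow_le_shuffleRatio_pow_mul hk e) _
    _ = (a : ℝ) ^ e - 0 ^ e := sum_Icc_pow_sub_sub_one_pow a e
    _ ≤ (a : ℝ) ^ e := sub_le_self _ (pow_nonneg le_rfl e)

theorem sum_sub_one_pow_mul_pow_le (a m p : ℕ) :
    ∑ k ∈ Icc 1 a, ((k : ℝ) - 1) ^ m * (k : ℝ) ^ p
      ≤ shuffleRatio a ^ m * ∑ k ∈ Icc 1 a, (k : ℝ) ^ (m + p) := by
  rw [mul_sum]
  refine sum_le_sum fun k hk => ?_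
  calc ((k : ℝ) - 1) ^ m * (k : ℝ) ^ p ≤ shuffleRatio a ^ m * (k : ℝ) ^ m * (k : ℝ) ^ p := by
        gcongr; exact sub_one_pow_le_shuffleRatio_pow_mul hk m
    _ = shuffleRatio a ^ m * (k : ℝ) ^ (m + p) := by rw [mul_assoc, ← pow_add]

theorem shuffleRatio_pow_mul_sum_pow_le_sum_sub_one_pow {a : ℕ} (ha : 0 < a) (m : ℕ) :
    shuffleRatio a ^ (m + 1) * ∑ k ∈ Icc 1 a, (k : ℝ) ^ m ≤ ∑ k ∈ Icc 1 a, ((k : ℝ) - 1) ^ m := by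
  have htele := sum_Icc_pow_sub_sub_one_pow a m
  rw [sum_sub_distrib] at htele
  have := pow_le_one_sub_shuffleRatio_pow_mul_sum_pow ha m
  have : (0 : ℝ) ≤ 0 ^ m := pow_nonneg le_rfl m
  linarith

theorem Finset.mul_sum_le_sum_mul_of_sign_change {ι R : Type*} [LinearOrder ι] [Ring R]
    [LinearOrder R] [IsOrderedRing R] {s : Finset ι} {w g : ι → R} {K : ι} (hw : Monotone w)
    (hneg : ∀ k ∈ s, k < K → g k ≤ 0) (hpos : ∀ k ∈ s, K ≤ k → 0 ≤ g k) :
    w K * ∑ k ∈ s, g k ≤ ∑ k ∈ s, w k * g k := by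
  rw [mul_sum]
  refine sum_le_sum fun k hk => ?_
  rcases lt_or_ge k K with hkK | hKk
  · exact mul_le_mul_of_nonpos_right (hw hkK.le) (hneg k hk hkK)
  · exact mul_le_mul_of_nonneg_right (hw hKk) (hpos k hk hKk)

theorem mul_pow_le_sub_one_pow_of_le {c x y : ℝ} {m : ℕ} (hx : 1 ≤ x) (hxy : x ≤ y)
    (h : c * x ^ m ≤ (x - 1) ^ m) : c * y ^ m ≤ (y - 1) ^ m := by
  have hcross : ((x - 1) * y) ^ m ≤ ((y - 1) * x) ^ m :=
    pow_le_pow_left₀ (by nlinarith) (by nlinarith) m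
  rw [mul_pow, mul_pow] at hcross
  refine le_of_mul_le_mul_right ?_ (pow_pos (by linarith : (0 : ℝ) < x) m)
  calc c * y ^ m * x ^ m = c * x ^ m * y ^ m := by ring
    _ ≤ (x - 1) ^ m * y ^ m := mul_le_mul_of_nonneg_right h (pow_nonneg (by linarith) m)
    _ ≤ (y - 1) ^ m * x ^ m := hcross

theorem shuffleRatio_pow_mul_sum_pow_le_sum_sub_one_pow_mul_pow {a : ℕ} (ha : 0 < a) (m p : ℕ) :
    shuffleRatio a ^ (m + 1) * ∑ k ∈ Icc 1 a, (k : ℝ) ^ (m + p)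
      ≤ ∑ k ∈ Icc 1 a, ((k : ℝ) - 1) ^ m * (k : ℝ) ^ p := by
  set α := shuffleRatio a
  set g : ℕ → ℝ := fun k => ((k : ℝ) - 1) ^ m - α ^ (m + 1) * (k : ℝ) ^ m with hg
  have hga : 0 ≤ g a := by
    have : α ^ (m + 1) * (a : ℝ) ^ m = α * ((a : ℝ) - 1) ^ m := by
      rw [← shuffleRatio_mul_self ha, mul_pow, pow_succ', mul_assoc]
    have : α ≤ 1 := (shuffleRatio_lt_one ha).le
    have : (0 : ℝ) ≤ ((a : ℝ) - 1) ^ m := pow_nonneg (sub_nonneg.mpr (by exact_mod_cast ha)) m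
    simp only [hg]
    nlinarith
  have hbase : 0 ≤ ∑ k ∈ Icc 1 a, g k := by
    rw [sum_sub_distrib, ← mul_sum]
    exact sub_nonneg.mpr (shuffleRatio_pow_mul_sum_pow_le_sum_sub_one_pow ha m)
  have hex : ∃ K, 1 ≤ K ∧ 0 ≤ g K := ⟨a, ha, hga⟩
  obtain ⟨hK1, hgK⟩ := Nat.find_spec hex
  have hweighted : 0 ≤ ∑ k ∈ Icc 1 a, (k : ℝ) ^ p * g k :=
    calc 0 ≤ (Nat.find hex : ℝ) ^ p * ∑ k ∈ Icc 1 a, g k := mul_nonneg (by positivity) hbase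
      _ ≤ ∑ k ∈ Icc 1 a, (k : ℝ) ^ p * g k :=
        mul_sum_le_sum_mul_of_sign_change
          (fun j k hjk => pow_le_pow_left₀ (Nat.cast_nonneg j) (Nat.cast_le.mpr hjk) p)
          (fun k hk hkK => (not_le.mp fun h => Nat.find_min hex hkK ⟨(mem_Icc.mp hk).1, h⟩).le)
          (fun k _ hKk => sub_nonneg.mpr (mul_pow_le_sub_one_pow_of_le
            (by exact_mod_cast hK1) (by exact_mod_cast hKk) (sub_nonneg.mp hgK)))
  have hexpand : ∑ k ∈ Icc 1 a, (k : ℝ) ^ p * g k = ∑ k ∈ Icc 1 a, ((k : ℝ) - 1) ^ m * (k : ℝ) ^ p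
      - α ^ (m + 1) * ∑ k ∈ Icc 1 a, (k : ℝ) ^ (m + p) := by
    rw [mul_sum, ← sum_sub_distrib]
    exact sum_congr rfl fun k _ => by simp only [hg]; ring
  linarith

theorem cast_sum_sub_one_pow_mul_pow (a m p : ℕ) :
    ((∑ k ∈ Icc 1 a, (k - 1) ^ m * k ^ p : ℕ) : ℝ)
      = ∑ k ∈ Icc 1 a, ((k : ℝ) - 1) ^ m * (k : ℝ) ^ p := by
  push_cast
  exact sum_congr rfl fun k hk => by rw [Nat.cast_pred (mem_Icc.mp hk).1]

/-- Bounds on the position of the bottom card after an `a`-shuffle: with `α = 1 - 1/a`,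
`(1/a)·α^{n-i+1}/(1-α^n) ≤ Q_a(i) ≤ (1/a)·α^{n-i}/(1-α^{n-1})`, where
`Q_a(i) = a^{-n} ∑_{k=1}^{a} (k-1)^{n-i} k^{i-1}` is the chance that the bottom card of an
`n`-card deck is at position `i` from the top after a GSR `a`-shuffle. -/
theorem bottom_card_position_bounds (n a : ℕ) (hn : 2 ≤ n) (ha : 2 ≤ a)
    (i : ℕ) (hi1 : 1 ≤ i) (hin : i ≤ n) :
    (1 / (a : ℝ)) * (1 - 1 / (a : ℝ)) ^ (n - i + 1) / (1 - (1 - 1 / (a : ℝ)) ^ n)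
      ≤ ((∑ k ∈ Finset.Icc 1 a, (k - 1) ^ (n - i) * k ^ (i - 1) : ℕ) : ℝ) / (a : ℝ) ^ n
    ∧ ((∑ k ∈ Finset.Icc 1 a, (k - 1) ^ (n - i) * k ^ (i - 1) : ℕ) : ℝ) / (a : ℝ) ^ n
      ≤ (1 / (a : ℝ)) * (1 - 1 / (a : ℝ)) ^ (n - i) / (1 - (1 - 1 / (a : ℝ)) ^ (n - 1)) := by
  obtain ⟨p, rfl⟩ : ∃ p, i = p + 1 := ⟨i - 1, by omega⟩
  obtain ⟨m, rfl⟩ : ∃ m, n = m + p + 1 := ⟨n - p - 1, by omega⟩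
  have ha0 : 0 < a := by omega
  have hA : (0 : ℝ) < a := by exact_mod_cast ha0
  rw [show m + p + 1 - (p + 1) = m by omega, Nat.add_sub_cancel, Nat.add_sub_cancel,
    cast_sum_sub_one_pow_mul_pow, show 1 - 1 / (a : ℝ) = shuffleRatio a from rfl]
  set α := shuffleRatio a
  set S := ∑ k ∈ Icc 1 a, ((k : ℝ) - 1) ^ m * (k : ℝ) ^ p
  set T := ∑ k ∈ Icc 1 a, (k : ℝ) ^ (m + p)
  have hα0 : 0 ≤ α := shuffleRatio_nonneg a
  have hpos : ∀ e ≠ 0, 0 < 1 - α ^ e := fun e he =>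
    sub_pos.mpr (pow_lt_one₀ hα0 (shuffleRatio_lt_one ha0) he)
  have hpow : (a : ℝ) ^ (m + p + 1) = a * a ^ (m + p) := pow_succ' _ _
  constructor
  · rw [div_le_div_iff₀ (hpos _ (by omega)) (by positivity), hpow]
    have hT := pow_le_one_sub_shuffleRatio_pow_mul_sum_pow ha0 (m + p)
    have hST := shuffleRatio_pow_mul_sum_pow_le_sum_sub_one_pow_mul_pow ha0 m p
    calc 1 / (a : ℝ) * α ^ (m + 1) * (a * a ^ (m + p)) = α ^ (m + 1) * a ^ (m + p) := by
          field_simp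
      _ ≤ α ^ (m + 1) * ((1 - α ^ (m + p + 1)) * T) := by gcongr
      _ ≤ S * (1 - α ^ (m + p + 1)) := by
          rw [mul_left_comm, mul_comm S]
          exact mul_le_mul_of_nonneg_left hST (hpos _ (by omega)).le
  · rw [div_le_div_iff₀ (by positivity) (hpos _ (by omega)), hpow]
    have hT := one_sub_shuffleRatio_pow_mul_sum_pow_le a (m + p)
    have hS := sum_sub_one_pow_mul_pow_le a m p
    calc S * (1 - α ^ (m + p)) ≤ α ^ m * T * (1 - α ^ (m + p)) := by
          gcongr; exact (hpos _ (by omega)).le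
      _ = α ^ m * ((1 - α ^ (m + p)) * T) := by ring
      _ ≤ α ^ m * a ^ (m + p) := by gcongr
      _ = 1 / (a : ℝ) * α ^ m * (a * a ^ (m + p)) := by field_simp
end

section
/- Let m ≥ 1, let D_1, …, D_m ≥ 1 with n = D_1 + ⋯ + D_m, and let a ≥ 1. Let v : {1,…,n} → {1,…,m} be the sorted deck (D_1 values equal to 1, followed by D_2 values equal to 2, …, followed by D_m values equal to m, in weakly increasing order), and let w* be the reversed deck (weakly decreasing: D_m values equal to m on top down to D_1 values equal to 1). Then among all decks w : {1,…,n} → {1,…,m} having exactly D_i entries equal to i for each i, the probability Q_a^v(w) of obtaining w from an a-shuffle of v is minimized at w = w*: Q_a^v(w*) ≤ Q_a^v(w) for every such w. -/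
/-!
Fix a label-preserving bijection `e` of positions with `w* ∘ e = w`. If the digits `f` sort
`w*` into `v`, then, by stability and because `w*` is weakly decreasing, `f` must strictly
increase along every strict increase of labels of `w*`. Hence `f ∘ e` strictly increases along
the label increases of `w`, so sorting by `f ∘ e` sorts `w`; as the sorted rearrangement of a
deck is unique, the result is `v`. Thus `f ↦ f ∘ e` injects the shuffles producing `v` from `w*`
into those producing it from `w`.
-/

/-- `σ` is the stable-sort permutation of `f`: `f ∘ σ` is weakly increasing and `σ` is
increasing on each level set of `f ∘ σ`. -/
def IsStableSort {n a : ℕ} (f : Fin n → Fin a) (σ : Equiv.Perm (Fin n)) : Prop :=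
  Monotone (f ∘ σ) ∧ ∀ i j : Fin n, i < j → f (σ i) = f (σ j) → σ i < σ j

open Finset

theorem exists_perm_comp_eq_of_card_fiber_eq {α β : Type*} [Fintype α] [DecidableEq β]
    {u w : α → β} (h : ∀ c, #{p | w p = c} = #{p | u p = c}) :
    ∃ e : Equiv.Perm α, ∀ p, u (e p) = w p := by
  have fibers : ∀ c, { p // w p = c } ≃ { p // u p = c } := fun c =>
    Fintype.equivOfCardEq (by rw [Fintype.card_subtype, Fintype.card_subtype, h c])
  exact ⟨Equiv.ofFiberEquiv fibers, Equiv.ofFiberEquiv_map fibers⟩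

namespace IsStableSort

variable {n a : ℕ} {f : Fin n → Fin a} {σ : Equiv.Perm (Fin n)}

theorem symm_lt_symm (h : IsStableSort f σ) {p q : Fin n}
    (hpq : f p < f q ∨ f p = f q ∧ p < q) : σ.symm p < σ.symm q := by
  rcases lt_trichotomy (σ.symm p) (σ.symm q) with hlt | heq | hgt
  · exact hlt
  · rcases hpq with hpq | ⟨-, hpq⟩ <;> simp_all
  · have hle : f q ≤ f p := by simpa using h.1 hgt.le
    rcases hpq with hpq | ⟨hfpq, hpq⟩
    · exact absurd hpq hle.not_gt
    · have := h.2 _ _ hgt (by simpa using hfpq.symm)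
      simp only [Equiv.apply_symm_apply] at this
      exact absurd hpq this.not_gt

theorem lt_of_antitone {β : Type*} [Preorder β] (h : IsStableSort f σ) {u : Fin n → β}
    (hu : Antitone u) (huσ : Monotone (u ∘ σ)) {p q : Fin n} (hpq : u p < u q) : f p < f q := by
  by_contra! hf
  have hqp : q < p := lt_of_not_ge fun hpq' => (hu hpq').not_gt hpq
  have hlt : σ.symm q < σ.symm p := h.symm_lt_symm (hf.lt_or_eq.imp_right fun he => ⟨he, hqp⟩)
  have := huσ hlt.le
  simp only [Function.comp_apply, Equiv.apply_symm_apply] at this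
  exact this.not_gt hpq

end IsStableSort

theorem monotone_comp_of_lt_imp_lt {ι α β γ : Type*} [Preorder ι] [LinearOrder β] [Preorder γ]
    {u : α → β} {g : α → γ} {τ : ι → α} (hgu : ∀ p q, u p < u q → g p < g q)
    (hg : Monotone (g ∘ τ)) : Monotone (u ∘ τ) := fun _ _ hij =>
  not_lt.mp fun hji => (hgu _ _ hji).not_ge (hg hij)

theorem reversed_deck_least_likely_general (m : ℕ) (D : Fin m → ℕ)
    (n : ℕ) (a : ℕ)
    (σ : (Fin n → Fin a) → Equiv.Perm (Fin n)) (hσ : ∀ f, IsStableSort f (σ f))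
    (v : Fin n → Fin m) (hv : Monotone v)
    (wstar : Fin n → Fin m) (hwstar : Antitone wstar)
    (hwstarD : ∀ c, (Finset.univ.filter fun p => wstar p = c).card = D c)
    (w : Fin n → Fin m)
    (hwD : ∀ c, (Finset.univ.filter fun p => w p = c).card = D c) :
    ((Finset.univ.filter fun f : Fin n → Fin a => wstar ∘ σ f = v).card : ℚ) / (a : ℚ) ^ n
      ≤ ((Finset.univ.filter fun f : Fin n → Fin a => w ∘ σ f = v).card : ℚ) / (a : ℚ) ^ n := by
  obtain ⟨e, he⟩ := exists_perm_comp_eq_of_card_fiber_eq fun c => (hwD c).trans (hwstarD c).symm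
  obtain rfl : w = wstar ∘ e := funext fun p => (he p).symm
  have hsorts : ∀ f, wstar ∘ σ f = v → wstar ∘ e ∘ σ (f ∘ e) = v := by
    intro f hf
    have hlt : ∀ p q, wstar (e p) < wstar (e q) → f (e p) < f (e q) := fun p q =>
      (hσ f).lt_of_antitone hwstar (hf ▸ hv)
    have hmono : Monotone (wstar ∘ ⇑(e * σ (f ∘ e))) :=
      monotone_comp_of_lt_imp_lt (u := wstar ∘ e) hlt (hσ _).1
    exact (Tuple.unique_monotone hmono (hf ▸ hv)).trans hf
  have hcard : #{f : Fin n → Fin a | wstar ∘ σ f = v} ≤ #{f | wstar ∘ e ∘ σ f = v} :=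
    Finset.card_le_card_of_injOn (· ∘ e)
      (fun f hf => by simpa using hsorts f (by simpa using hf))
      e.surjective.injective_comp_right.injOn
  exact div_le_div_of_nonneg_right (by exact_mod_cast hcard) (by positivity)

/-- After an `a`-shuffle of the sorted deck `v` (with `D_1` cards labelled `1` on top down
to `D_m` cards labelled `m` on the bottom), the least likely deck is the reversed deck `w*`
(`m`'s on top down to `1`'s on the bottom): `Q_a^v(w*) ≤ Q_a^v(w)` for every deck `w` with
the same multiset of labels, where `Q_a^v(w) = a^{-n}·#{f : w ∘ σ_f = v}`. -/
theorem reversed_deck_least_likely (m : ℕ) (hm : 1 ≤ m) (D : Fin m → ℕ) (hD : ∀ c, 1 ≤ D c)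
    (n : ℕ) (hn : n = ∑ c, D c) (a : ℕ) (ha : 1 ≤ a)
    (σ : (Fin n → Fin a) → Equiv.Perm (Fin n)) (hσ : ∀ f, IsStableSort f (σ f))
    (v : Fin n → Fin m) (hv : Monotone v)
    (hvD : ∀ c, (Finset.univ.filter fun p => v p = c).card = D c)
    (wstar : Fin n → Fin m) (hwstar : Antitone wstar)
    (hwstarD : ∀ c, (Finset.univ.filter fun p => wstar p = c).card = D c)
    (w : Fin n → Fin m)
    (hwD : ∀ c, (Finset.univ.filter fun p => w p = c).card = D c) :
    ((Finset.univ.filter fun f : Fin n → Fin a => wstar ∘ σ f = v).card : ℚ) / (a : ℚ) ^ n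
      ≤ ((Finset.univ.filter fun f : Fin n → Fin a => w ∘ σ f = v).card : ℚ) / (a : ℚ) ^ n :=
  reversed_deck_least_likely_general m D n a σ hσ v hv wstar hwstar hwstarD w hwD
end

section
/- Let m ≥ 1, let D_1, …, D_m ≥ 1 with n = D_1 + ⋯ + D_m, and let a ≥ 1. Let v : {1,…,n} → {1,…,m} be the sorted deck (D_1 values equal to 1, then D_2 values equal to 2, …, then D_m values equal to m). Then the separation distance after an a-shuffle of v, namely SEP(a) = max_w (1 − C(n; D_1,…,D_m)·Q_a^v(w)) where the maximum is over all decks w with exactly D_i entries equal to i, satisfies SEP(a) = 1 − a^{−n}·C(n; D_1,…,D_m)·∑_{0 = k_0 < k_1 < ⋯ < k_{m−1} < a} (a − k_{m−1})^{D_m} · ∏_{j=1}^{m−1} ((k_j − k_{j−1})^{D_j} − (k_j − k_{j−1} − 1)^{D_j}), where the sum is over integer sequences 0 = k_0 < k_1 < ⋯ < k_{m−1} < a. -/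
/-!
Order the positions by the lexicographic key `p ↦ (f p, p)`; the stable sort `σ_f` lists them in
increasing key order. A rearrangement of a deck that is monotone is determined by the label counts,
so `w ∘ σ_f = v` holds exactly when `w` is monotone along the key. Hence every `f` separating the
levels of `w` (`w p < w q → f p < f q`) carries `w` to `v`, and for the antitone deck `v ∘ rev`
these are the only such `f`, because ties in `f` are broken by position in the wrong direction.

The number of level-separating `f` depends only on the level sizes. Grouping them by `k_0 = 0` and
`k_{j+1} = 1 + max f` on level `j`, level `j` is mapped into `[k_j, k_{j+1})` attaining
`k_{j+1} - 1`, in `(k_{j+1} - k_j)^{D_j} - (k_{j+1} - k_j - 1)^{D_j}` ways, and the top level into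
`[k_{m-1}, a)`. So `Q_a^v` is smallest at the reversed deck, where it equals the stated sum.
-/

open Finset

theorem Monotone.eq_of_card_fiber_eq {n : ℕ} {α : Type*} [LinearOrder α] {g h : Fin n → α}
    (hg : Monotone g) (hh : Monotone h) (hgh : ∀ c, #{p | g p = c} = #{p | h p = c}) :
    g = h := by
  refine List.ofFn_injective <|
    List.Perm.eq_of_pairwise' hg.sortedLE_ofFn.pairwise hh.sortedLE_ofFn.pairwise ?_
  rw [← Multiset.coe_eq_coe, ← Fin.univ_val_map, ← Fin.univ_val_map]
  ext c
  simp only [Multiset.count_map, eq_comm (a := c), ← Finset.filter_val, ← Finset.card_def]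
  convert hgh c

theorem card_filter_comp_perm_eq {ι α : Type*} [Fintype ι] [DecidableEq α] (w : ι → α)
    (e : Equiv.Perm ι) (c : α) : #{p | w (e p) = c} = #{p | w p = c} :=
  card_equiv e (by simp)

theorem monotone_comp_perm_iff {ι β γ : Type*} [LinearOrder ι] [LinearOrder β] [LinearOrder γ]
    {key : ι → β} {e : Equiv.Perm ι} (he : StrictMono (key ∘ e)) (w : ι → γ) :
    Monotone (w ∘ e) ↔ ∀ p q, w p < w q → key p < key q := by
  constructor
  · intro hw p q hpq
    by_contra! hqp
    have := hw (he.le_iff_le.1 (by simpa using hqp) : e.symm q ≤ e.symm p)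
    simp only [Function.comp_apply, Equiv.apply_symm_apply] at this
    exact this.not_gt hpq
  · intro hk i j hij
    by_contra! hji
    exact (he.lt_iff_lt.1 (hk _ _ hji)).not_ge hij

theorem IsStableSort.strictMono_toLex {n a : ℕ} {f : Fin n → Fin a} {σ : Equiv.Perm (Fin n)}
    (h : IsStableSort f σ) : StrictMono fun i => toLex (f (σ i), σ i) := by
  intro i j hij
  rcases (h.1 hij.le).lt_or_eq with hlt | heq
  · exact Prod.Lex.lt_iff.2 (Or.inl hlt)
  · exact Prod.Lex.lt_iff.2 (Or.inr ⟨heq, h.2 i j hij heq⟩)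

theorem IsStableSort.comp_eq_iff {n a m : ℕ} {f : Fin n → Fin a} {σ : Equiv.Perm (Fin n)}
    (h : IsStableSort f σ) {v w : Fin n → Fin m} (hv : Monotone v)
    (hwv : ∀ c, #{p | w p = c} = #{p | v p = c}) :
    w ∘ σ = v ↔ ∀ p q, w p < w q → toLex (f p, p) < toLex (f q, q) := by
  rw [← monotone_comp_perm_iff h.strictMono_toLex]
  refine ⟨fun hwσ => hwσ ▸ hv, fun hmono => hmono.eq_of_card_fiber_eq hv fun c => ?_⟩
  exact (card_filter_comp_perm_eq w σ c).trans (hwv c)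

def SeparatesLevels {ι α β : Type*} [LT α] [LT β] (w : ι → α) (f : ι → β) : Prop :=
  ∀ p q, w p < w q → f p < f q

instance {ι α β : Type*} [Fintype ι] [LT α] [LT β] [DecidableLT α] [DecidableLT β] (w : ι → α) :
    DecidablePred (SeparatesLevels (β := β) w) :=
  fun _ => by unfold SeparatesLevels; infer_instance

theorem IsStableSort.comp_eq_of_separatesLevels {n a m : ℕ} {f : Fin n → Fin a}
    {σ : Equiv.Perm (Fin n)} (h : IsStableSort f σ) {v w : Fin n → Fin m} (hv : Monotone v)
    (hwv : ∀ c, #{p | w p = c} = #{p | v p = c}) (hf : SeparatesLevels w f) : w ∘ σ = v :=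
  (h.comp_eq_iff hv hwv).2 fun p q hpq => Prod.Lex.lt_iff.2 (Or.inl (hf p q hpq))

theorem IsStableSort.separatesLevels_of_comp_eq {n a m : ℕ} {f : Fin n → Fin a}
    {σ : Equiv.Perm (Fin n)} (h : IsStableSort f σ) {v w : Fin n → Fin m} (hv : Monotone v)
    (hw : Antitone w) (hwσ : w ∘ σ = v) : SeparatesLevels w f := by
  intro p q hpq
  have hqp : q < p := lt_of_not_ge fun hpq' => (hw hpq').not_gt hpq
  have hwv c : #{p | w p = c} = #{p | v p = c} := by
    rw [← hwσ]; exact (card_filter_comp_perm_eq w σ c).symm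
  rcases Prod.Lex.lt_iff.1 ((h.comp_eq_iff hv hwv).1 hwσ p q hpq) with hlt | ⟨-, hlt⟩
  · exact hlt
  · exact absurd hlt hqp.not_gt

theorem card_filter_forall_restrict_mem {ι κ α : Type*} [Fintype ι] [DecidableEq ι] [Fintype κ]
    [DecidableEq κ] [Fintype α] [DecidableEq α] (v : ι → κ)
    (W : ∀ c, Finset ({p // v p = c} → α)) :
    #{f : ι → α | ∀ c, (fun p : {p // v p = c} => f p) ∈ W c} = ∏ c, #(W c) := by
  rw [← Fintype.card_piFinset]
  exact card_equiv (((Equiv.sigmaFiberEquiv v).symm.arrowCongr (Equiv.refl α)).trans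
    (Equiv.piCurry fun _ _ => α)) fun f => by
      simp only [mem_filter, mem_univ, true_and, Fintype.mem_piFinset]
      rfl

theorem card_filter_forall_mem_and_exists_eq {B α : Type*} [Fintype B] [DecidableEq B]
    [Fintype α] [DecidableEq α] {s : Finset α} {x : α} (hx : x ∈ s) :
    #{h : B → α | (∀ p, h p ∈ s) ∧ ∃ p, h p = x}
      = #s ^ Fintype.card B - (#s - 1) ^ Fintype.card B := by
  have : ({h : B → α | (∀ p, h p ∈ s) ∧ ∃ p, h p = x} : Finset _)
      = Fintype.piFinset (fun _ => s) \ Fintype.piFinset (fun _ => s.erase x) := by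
    ext h
    simp only [mem_filter, mem_univ, true_and, mem_sdiff, Fintype.mem_piFinset, mem_erase]
    grind
  rw [this, card_sdiff_of_subset (Fintype.piFinset_subset _ _ fun _ => erase_subset x s)]
  simp [card_erase_of_mem hx]

section Thresholds

variable {n m a : ℕ} {v : Fin n → Fin (m + 1)} {k k' : Fin (m + 1) → Fin a} {f : Fin n → Fin a}
  {D : Fin (m + 1) → ℕ}

variable (v) in
/-- The thresholds `k_j` of the formula for `f`: level `j` of `v` is mapped above `k j`, and
`k (j + 1) = 1 + max f` on level `j`. -/
def HasThresholds (k : Fin (m + 1) → Fin a) (f : Fin n → Fin a) : Prop :=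
  (∀ p, k (v p) ≤ f p) ∧
    ∀ j : Fin m, (∀ p, v p = j.castSucc → f p < k j.succ) ∧
      ∃ p, v p = j.castSucc ∧ (f p : ℕ) + 1 = k j.succ

instance : DecidablePred (HasThresholds v k) :=
  fun _ => by unfold HasThresholds; infer_instance

theorem HasThresholds.strictMono (h : HasThresholds v k f) : StrictMono k := by
  refine Fin.strictMono_iff_lt_succ.2 fun j => ?_
  obtain ⟨p, hp, hfp⟩ := (h.2 j).2
  have hkp := h.1 p
  rw [hp, Fin.le_def] at hkp
  rw [Fin.lt_def]
  omega

theorem HasThresholds.separatesLevels (h : HasThresholds v k f) : SeparatesLevels v f := by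
  intro p q hpq
  obtain ⟨j, hj⟩ := Fin.exists_castSucc_eq.2 (hpq.trans_le (Fin.le_last _)).ne
  calc f p < k j.succ := (h.2 j).1 p hj.symm
    _ ≤ k (v q) := h.strictMono.monotone (Fin.castSucc_lt_iff_succ_le.1 (hj ▸ hpq))
    _ ≤ f q := h.1 q

theorem HasThresholds.unique (h : HasThresholds v k f) (h' : HasThresholds v k' f)
    (h0 : k 0 = k' 0) : k = k' := by
  funext c
  cases c using Fin.cases with
  | zero => exact h0
  | succ j =>
    obtain ⟨p, hp, hfp⟩ := (h.2 j).2
    obtain ⟨q, hq, hfq⟩ := (h'.2 j).2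
    have hq' := Fin.lt_def.1 ((h.2 j).1 q hq)
    have hp' := Fin.lt_def.1 ((h'.2 j).1 p hp)
    ext
    omega

theorem exists_hasThresholds (ha : 0 < a) (hne : ∀ c, ({p | v p = c} : Finset _).Nonempty)
    (hf : SeparatesLevels v f) : ∃ k, k 0 = ⟨0, ha⟩ ∧ HasThresholds v k f := by
  choose top htop hmax using fun c => exists_max_image _ f (hne c)
  simp only [mem_filter, mem_univ, true_and] at htop hmax
  have hlt (j : Fin m) : f (top j.castSucc) < f (top (Fin.last m)) :=
    hf _ _ (by rw [htop, htop]; exact Fin.castSucc_lt_last j)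
  refine ⟨Fin.cases ⟨0, ha⟩ fun j =>
      ⟨f (top j.castSucc) + 1, lt_of_le_of_lt (Nat.succ_le_of_lt (hlt j)) (Fin.is_lt _)⟩,
    rfl, fun p => ?_, fun j => ⟨fun p hp => ?_, top j.castSucc, htop _, rfl⟩⟩
  · obtain ⟨c, hc⟩ : ∃ c, v p = c := ⟨_, rfl⟩
    rw [hc]
    cases c using Fin.cases with
    | zero => exact Nat.zero_le _
    | succ j => exact hf (top j.castSucc) p (by rw [htop, hc]; exact Fin.castSucc_lt_succ)
  · exact Nat.lt_succ_of_le (hmax _ p hp)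

variable (v) in
def levelWindow (k : Fin (m + 1) → Fin a) : ∀ c, Finset ({p // v p = c} → Fin a) :=
  Fin.lastCases (motive := fun c => Finset ({p // v p = c} → Fin a))
    (Fintype.piFinset fun _ => Ici (k (Fin.last m)))
    fun j => {h | (∀ p, h p ∈ Ico (k j.castSucc) (k j.succ)) ∧ ∃ p, (h p : ℕ) + 1 = k j.succ}

theorem hasThresholds_iff_forall_mem_levelWindow :
    HasThresholds v k f ↔ ∀ c, (fun p : {p // v p = c} => f p) ∈ levelWindow v k c := by
  rw [Fin.forall_fin_succ']
  simp only [levelWindow, Fin.lastCases_castSucc, Fin.lastCases_last, mem_filter, mem_univ,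
    true_and, Fintype.mem_piFinset, mem_Ico, mem_Ici, Subtype.forall, Subtype.exists, HasThresholds]
  constructor
  · rintro ⟨hk, hj⟩
    refine ⟨fun j => ⟨fun p hp => ⟨hp ▸ hk p, (hj j).1 p hp⟩, ?_⟩, fun p hp => hp ▸ hk p⟩
    obtain ⟨p, hp, hfp⟩ := (hj j).2
    exact ⟨p, hp, hfp⟩
  · rintro ⟨hj, hlast⟩
    refine ⟨fun p => ?_, fun j => ⟨fun p hp => ((hj j).1 p hp).2, ?_⟩⟩
    · obtain ⟨j, hp⟩ | hp := (v p).eq_castSucc_or_eq_last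
      · exact hp ▸ ((hj j).1 p hp).1
      · exact hp ▸ hlast p hp
    · obtain ⟨p, hp, hfp⟩ := (hj j).2
      exact ⟨p, hp, hfp⟩

theorem card_levelWindow_last :
    #(levelWindow v k (Fin.last m))
      = (a - k (Fin.last m)) ^ Fintype.card {p // v p = Fin.last m} := by
  simp [levelWindow, Fin.card_Ici]

theorem card_levelWindow_castSucc (hk : StrictMono k) (j : Fin m) :
    #(levelWindow v k j.castSucc)
      = ((k j.succ : ℕ) - k j.castSucc) ^ Fintype.card {p // v p = j.castSucc}
        - ((k j.succ : ℕ) - k j.castSucc - 1) ^ Fintype.card {p // v p = j.castSucc} := by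
  have hlt := Fin.lt_def.1 (hk (Fin.castSucc_lt_succ (i := j)))
  let x : Fin a := ⟨k j.succ - 1, by omega⟩
  have hx : x ∈ Ico (k j.castSucc) (k j.succ) := by
    simp only [mem_Ico, Fin.le_def, Fin.lt_def, x]
    omega
  rw [← Fin.card_Ico, ← card_filter_forall_mem_and_exists_eq hx]
  simp only [levelWindow, Fin.lastCases_castSucc]
  congr! 4 with h
  ext p
  simp only [Fin.ext_iff, x]
  omega

theorem card_hasThresholds (hvD : ∀ c, #{p | v p = c} = D c) (hk : StrictMono k) :
    #{f | HasThresholds v k f}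
      = (a - k (Fin.last m)) ^ D (Fin.last m) *
          ∏ j : Fin m, (((k j.succ : ℕ) - k j.castSucc) ^ D j.castSucc
            - ((k j.succ : ℕ) - k j.castSucc - 1) ^ D j.castSucc) := by
  have hcard c : Fintype.card {p // v p = c} = D c := by rw [Fintype.card_subtype, hvD]
  have hprod : #{f | HasThresholds v k f} = ∏ c, #(levelWindow v k c) := by
    convert card_filter_forall_restrict_mem v (levelWindow v k) using 3 with f
    exact hasThresholds_iff_forall_mem_levelWindow
  rw [hprod, Fin.prod_univ_castSucc, mul_comm, card_levelWindow_last, hcard]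
  simp_rw [card_levelWindow_castSucc hk, hcard]

theorem card_separatesLevels (ha : 0 < a) (hD : ∀ c, 1 ≤ D c)
    (hvD : ∀ c, #{p | v p = c} = D c) :
    #{f : Fin n → Fin a | SeparatesLevels v f}
      = ∑ k ∈ {k : Fin (m + 1) → Fin a | k 0 = ⟨0, ha⟩ ∧ StrictMono k},
          (a - k (Fin.last m)) ^ D (Fin.last m) *
            ∏ j : Fin m, (((k j.succ : ℕ) - k j.castSucc) ^ D j.castSucc
              - ((k j.succ : ℕ) - k j.castSucc - 1) ^ D j.castSucc) := by
  have hne c : ({p | v p = c} : Finset _).Nonempty := card_pos.1 (by rw [hvD]; exact hD c)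
  have hunion : ({f | SeparatesLevels v f} : Finset _)
      = ({k : Fin (m + 1) → Fin a | k 0 = ⟨0, ha⟩ ∧ StrictMono k} : Finset _).biUnion
          fun k => {f | HasThresholds v k f} := by
    ext f
    simp only [mem_filter, mem_univ, true_and, mem_biUnion]
    constructor
    · intro hf
      obtain ⟨k, hk0, hk⟩ := exists_hasThresholds ha hne hf
      exact ⟨k, ⟨hk0, hk.strictMono⟩, hk⟩
    · rintro ⟨k, -, hk⟩
      exact hk.separatesLevels
  rw [hunion, card_biUnion]
  · refine sum_congr rfl fun k hk => card_hasThresholds hvD (mem_filter.1 hk).2.2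
  · intro k hk k' hk' hne
    refine disjoint_filter.2 fun f _ h h' => hne (h.unique h' ?_)
    rw [(mem_filter.1 hk).2.1, (mem_filter.1 hk').2.1]

end Thresholds

/-- The separation distance after an `a`-shuffle of the sorted deck with `D_i` cards
labelled `i` equals
`1 - a^{-n}·C(n;D_1,…,D_m)·∑_{0=k_0<k_1<⋯<k_{m-1}<a} (a-k_{m-1})^{D_m}
  ∏_{j=1}^{m-1} ((k_j-k_{j-1})^{D_j} - (k_j-k_{j-1}-1)^{D_j})`,
where `SEP(a) = max_w (1 - C(n;D_1,…,D_m)·Q_a^v(w))`, the maximum being over all decks `w`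
with the same multiset of labels. -/
theorem separation_distance_sorted_deck (m : ℕ) (hm : 1 ≤ m) (D : Fin m → ℕ)
    (hD : ∀ c, 1 ≤ D c) (n : ℕ) (a : ℕ) (ha : 1 ≤ a)
    (σ : (Fin n → Fin a) → Equiv.Perm (Fin n)) (hσ : ∀ f, IsStableSort f (σ f))
    (v : Fin n → Fin m) (hv : Monotone v)
    (hvD : ∀ c, (Finset.univ.filter fun p => v p = c).card = D c) :
    (Finset.univ.filter fun w : Fin n → Fin m =>
        ∀ c, (Finset.univ.filter fun p => w p = c).card = D c).sup'
      ⟨v, Finset.mem_filter.mpr ⟨Finset.mem_univ v, hvD⟩⟩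
      (fun w => 1 - (Nat.multinomial Finset.univ D : ℚ) *
        (((Finset.univ.filter fun f : Fin n → Fin a => w ∘ σ f = v).card : ℚ) / (a : ℚ) ^ n))
    = 1 - (Nat.multinomial Finset.univ D : ℚ) / (a : ℚ) ^ n *
        ((∑ k ∈ Finset.univ.filter
            (fun k : Fin m → Fin a => k ⟨0, by omega⟩ = ⟨0, by omega⟩ ∧ StrictMono k),
          (a - (k ⟨m - 1, by omega⟩ : ℕ)) ^ (D ⟨m - 1, by omega⟩) *
            ∏ j : Fin (m - 1),
              (((k ⟨j.val + 1, by have := j.isLt; omega⟩ : ℕ)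
                  - (k ⟨j.val, by have := j.isLt; omega⟩ : ℕ)) ^ (D ⟨j.val, by have := j.isLt; omega⟩)
                - ((k ⟨j.val + 1, by have := j.isLt; omega⟩ : ℕ)
                  - (k ⟨j.val, by have := j.isLt; omega⟩ : ℕ) - 1) ^ (D ⟨j.val, by have := j.isLt; omega⟩)) : ℕ) : ℚ) := by
  obtain ⟨m, rfl⟩ : ∃ m', m = m' + 1 := ⟨m - 1, by omega⟩
  have hcount {w : Fin n → Fin (m + 1)} (hw : ∀ c, #{p | w p = c} = D c) :=
    card_separatesLevels (a := a) ha hD hw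
  have hle {w : Fin n → Fin (m + 1)} (hw : ∀ c, #{p | w p = c} = D c) :
      #{f : Fin n → Fin a | SeparatesLevels w f} ≤ #{f | w ∘ σ f = v} :=
    card_le_card <| monotone_filter_right _ fun f _ hf =>
      (hσ f).comp_eq_of_separatesLevels hv (fun c => (hw c).trans (hvD c).symm) hf
  have hrev : ∀ c, #{p | (v ∘ Fin.rev) p = c} = D c := fun c =>
    (card_filter_comp_perm_eq v Fin.revPerm c).trans (hvD c)
  have heq : #{f | (v ∘ Fin.rev) ∘ σ f = v}
      = #{f : Fin n → Fin a | SeparatesLevels (v ∘ Fin.rev) f} :=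
    le_antisymm (card_le_card <| monotone_filter_right _ fun f _ hf =>
      (hσ f).separatesLevels_of_comp_eq hv (hv.comp_antitone Fin.rev_anti) hf) (hle hrev)
  rw [div_mul_eq_mul_div, mul_div_assoc]
  refine le_antisymm (sup'_le _ _ fun w hw => ?_)
    (le_sup'_of_le _ (mem_filter.2 ⟨mem_univ _, hrev⟩) ?_)
  · have hS := (hcount (mem_filter.1 hw).2).symm.trans_le (hle (mem_filter.1 hw).2)
    gcongr
    exact_mod_cast hS
  · rw [heq, hcount hrev]
    exact le_rfl
end

section
/- Fix n ≥ 1 and let v : {1,…,2n} → {1,2} be the deck consisting of n cards labelled 1 (red) on top of n cards labelled 2 (black), i.e. v(i) = 1 for i ≤ n and v(i) = 2 for i > n. Then for every deck w : {1,…,2n} → {1,2} with exactly n entries equal to 1 and n entries equal to 2, the probability of obtaining w from a single GSR 2-shuffle of v is Q_2^v(w) = (2^{h(w)} + 2^{t(w)} − 1)/2^{2n}, where h(w) is the number of 1's occurring before the first 2 in w and t(w) is the number of 2's occurring after the final 1 in w. -/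
/-- For a two-letter deck `w`, the number of `1`'s (here `0 : Fin 2`) before the first
`2` (here `1 : Fin 2`). -/
def headRun {N : ℕ} (w : Fin N → Fin 2) : ℕ :=
  (Finset.univ.filter fun p : Fin N => ∀ k ≤ p, w k = 0).card

/-- For a two-letter deck `w`, the number of `2`'s (here `1 : Fin 2`) after the final
`1` (here `0 : Fin 2`). -/
def tailRun {N : ℕ} (w : Fin N → Fin 2) : ℕ :=
  (Finset.univ.filter fun p : Fin N => ∀ k, p ≤ k → w k = 1).card

lemma fin2 (x : Fin 2) : x = 0 ∨ x = 1 := by omega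

def C1 {N : ℕ} (w f : Fin N → Fin 2) : Prop :=
  (∀ p, f p = 0 → w p = 0) ∧ ∀ p, f p = 1 → w p = 0 → ∀ k ≤ p, w k = 0

def C2 {N : ℕ} (w f : Fin N → Fin 2) : Prop :=
  (∀ p, f p = 1 → w p = 1) ∧ ∀ p, f p = 0 → w p = 1 → ∀ k, p ≤ k → w k = 1


lemma IsStableSort.zero_iff {N : ℕ} {f : Fin N → Fin 2} {σ : Equiv.Perm (Fin N)}
    (h : IsStableSort f σ) (i : Fin N) :
    f (σ i) = 0 ↔ (i : ℕ) < (Finset.univ.filter fun p => f p = 0).card := by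
  classical
  set T : Finset (Fin N) := Finset.univ.filter (fun j => f (σ j) = 0) with hT
  have hmemT : ∀ j : Fin N, j ∈ T ↔ f (σ j) = 0 := by intro j; simp [hT]
  have hdown : ∀ j i : Fin N, j ≤ i → i ∈ T → j ∈ T := by
    intro j i hji hi
    rw [hmemT] at hi ⊢
    have h2 := h.1 hji
    simp only [Function.comp_apply] at h2
    rw [hi] at h2
    exact Fin.le_zero_iff.mp h2
  have hcard : (Finset.univ.filter fun p => f p = 0).card = T.card := by
    have himg : (Finset.univ.filter fun p => f p = 0) = T.image σ := by
      ext p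
      simp only [Finset.mem_filter, Finset.mem_univ, true_and, Finset.mem_image]
      constructor
      · intro hp; exact ⟨σ.symm p, by rw [hmemT]; simp [hp], by simp⟩
      · rintro ⟨j, hj, rfl⟩; exact (hmemT j).mp hj
    rw [himg, Finset.card_image_of_injective _ σ.injective]
  rw [hcard, ← hmemT]
  constructor
  · intro hi
    have hsub : Finset.Iic i ⊆ T := fun j hj => hdown j i (Finset.mem_Iic.mp hj) hi
    have hc := Finset.card_le_card hsub
    rw [Fin.card_Iic] at hc
    omega
  · intro hi
    by_contra hni
    have hsub : T ⊆ Finset.Iio i := by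
      intro j hj
      rw [Finset.mem_Iio]
      by_contra hji
      exact hni (hdown i j (le_of_not_gt hji) hj)
    have hc := Finset.card_le_card hsub
    rw [Fin.card_Iio] at hc
    omega

lemma cond_iff {n : ℕ} (hn : 1 ≤ n) {w v f : Fin (2 * n) → Fin 2}
    {σ : Equiv.Perm (Fin (2 * n))} (hs : IsStableSort f σ)
    (hv : ∀ p : Fin (2 * n), v p = if (p : ℕ) < n then 0 else 1)
    (hw0 : (Finset.univ.filter fun p => w p = 0).card = n)
    (hw1 : (Finset.univ.filter fun p => w p = 1).card = n) :
    w ∘ σ = v ↔ (C1 w f ∨ C2 w f) := by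
  classical
  set k := (Finset.univ.filter fun p => f p = 0).card with hkdef
  have hk0 : ∀ i : Fin (2 * n), f (σ i) = 0 ↔ (i : ℕ) < k := hs.zero_iff
  have hk1 : ∀ i : Fin (2 * n), f (σ i) = 1 ↔ ¬ (i : ℕ) < k := by
    intro i
    rcases fin2 (f (σ i)) with h | h <;> rw [h] <;> simp [← hk0 i, h]
  have hksum : k + (Finset.univ.filter fun p => f p = 1).card = 2 * n := by
    rw [hkdef]
    have : (Finset.univ.filter fun p => f p = 1) =
        (Finset.univ.filter fun p : Fin (2 * n) => ¬ f p = 0) := by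
      apply Finset.filter_congr
      intro p _
      rcases fin2 (f p) with h | h <;> simp [h]
    rw [this, Finset.card_filter_add_card_filter_not, Finset.card_univ, Fintype.card_fin]
  constructor
  · intro hC
    have hC' : ∀ i : Fin (2 * n), w (σ i) = if (i : ℕ) < n then 0 else 1 := by
      intro i; rw [← hv i, ← hC]; rfl
    rcases le_total k n with hkn | hkn
    · left
      have part1 : ∀ p, f p = 0 → w p = 0 := by
        intro p hp
        have h1 : f (σ (σ.symm p)) = 0 := by simpa using hp
        have h2 := (hk0 _).mp h1
        have := hC' (σ.symm p)
        rw [if_pos (by omega)] at this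
        simpa using this
      refine ⟨part1, ?_⟩
      intro p hp1 hwp q hqp
      have hi1 : f (σ (σ.symm p)) = 1 := by simpa using hp1
      have hin : ((σ.symm p : Fin (2 * n)) : ℕ) < n := by
        by_contra hni
        have := hC' (σ.symm p)
        rw [if_neg hni] at this
        simp only [Equiv.apply_symm_apply] at this
        rw [this] at hwp
        exact absurd hwp (by decide)
      rcases fin2 (f q) with hq | hq
      · exact part1 q hq
      · have hj1 : f (σ (σ.symm q)) = 1 := by simpa using hq
        have hji : σ.symm q ≤ σ.symm p := by
          by_contra hlt
          push_neg at hlt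
          have := hs.2 _ _ hlt (by rw [hi1, hj1])
          simp only [Equiv.apply_symm_apply] at this
          exact absurd (lt_of_lt_of_le this hqp) (lt_irrefl p)
        have := hC' (σ.symm q)
        rw [if_pos (lt_of_le_of_lt (Fin.le_def.mp hji) hin)] at this
        simpa using this
    · right
      have part1 : ∀ p, f p = 1 → w p = 1 := by
        intro p hp
        have h1 : f (σ (σ.symm p)) = 1 := by simpa using hp
        have h2 := (hk1 _).mp h1
        have := hC' (σ.symm p)
        rw [if_neg (by omega)] at this
        simpa using this
      refine ⟨part1, ?_⟩
      intro p hp0 hwp q hpq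
      have hi0 : f (σ (σ.symm p)) = 0 := by simpa using hp0
      have hin : ¬ ((σ.symm p : Fin (2 * n)) : ℕ) < n := by
        intro hni
        have := hC' (σ.symm p)
        rw [if_pos hni] at this
        simp only [Equiv.apply_symm_apply] at this
        rw [this] at hwp
        exact absurd hwp (by decide)
      rcases fin2 (f q) with hq | hq
      · have hj0 : f (σ (σ.symm q)) = 0 := by simpa using hq
        have hji : σ.symm p ≤ σ.symm q := by
          by_contra hlt
          push_neg at hlt
          have := hs.2 _ _ hlt (by rw [hi0, hj0])
          simp only [Equiv.apply_symm_apply] at this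
          exact absurd (lt_of_lt_of_le this hpq) (lt_irrefl q)
        have := hC' (σ.symm q)
        rw [if_neg (by have := Fin.le_def.mp hji; omega)] at this
        simpa using this
      · exact part1 q hq
  · intro hC
    funext i
    simp only [Function.comp_apply]
    rw [hv i]
    rcases hC with ⟨h1, h2⟩ | ⟨h1, h2⟩
    · -- C1 case
      have hkn : k ≤ n := by
        have hle : (Finset.univ.filter fun p => f p = 0).card ≤
            (Finset.univ.filter fun p => w p = 0).card := by
          apply Finset.card_le_card
          intro p hp
          simp only [Finset.mem_filter, Finset.mem_univ, true_and] at hp ⊢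
          exact h1 p hp
        omega
      by_cases hik : (i : ℕ) < k
      · rw [if_pos (by omega)]
        exact h1 _ ((hk0 i).mpr hik)
      · have hfi : f (σ i) = 1 := (hk1 i).mpr hik
        by_cases hin : (i : ℕ) < n
        · rw [if_pos hin]
          by_contra hne
          have hwi : w (σ i) = 1 := by rcases fin2 (w (σ i)) with h | h; exact absurd h hne; exact h
          have hall : ∀ j : Fin (2 * n), i ≤ j → w (σ j) = 1 := by
            intro j hij
            have hfj : f (σ j) = 1 := (hk1 j).mpr (by have := Fin.le_def.mp hij; omega)
            rcases fin2 (w (σ j)) with hwj | hwj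
            · exfalso
              have hσij : σ i ≤ σ j := by
                rcases eq_or_lt_of_le hij with rfl | hlt
                · exact le_refl _
                · exact le_of_lt (hs.2 _ _ hlt (by rw [hfi, hfj]))
              have := h2 (σ j) hfj hwj (σ i) hσij
              rw [this] at hwi
              exact absurd hwi (by decide)
            · exact hwj
          have hsub : (Finset.Ici i).image σ ⊆ Finset.univ.filter fun p => w p = 1 := by
            intro p hp
            simp only [Finset.mem_image, Finset.mem_Ici] at hp
            obtain ⟨j, hj, rfl⟩ := hp
            simp only [Finset.mem_filter, Finset.mem_univ, true_and]
            exact hall j hj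
          have hc := Finset.card_le_card hsub
          rw [Finset.card_image_of_injective _ σ.injective, Fin.card_Ici, hw1] at hc
          omega
        · rw [if_neg hin]
          by_contra hne
          have hwi : w (σ i) = 0 := by rcases fin2 (w (σ i)) with h | h; exact h; exact absurd h hne
          have hhead := h2 (σ i) hfi hwi
          have hall : ∀ j : Fin (2 * n), j ≤ i → w (σ j) = 0 := by
            intro j hij
            by_cases hjk : (j : ℕ) < k
            · exact h1 _ ((hk0 j).mpr hjk)
            · have hfj : f (σ j) = 1 := (hk1 j).mpr hjk
              have hσij : σ j ≤ σ i := by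
                rcases eq_or_lt_of_le hij with rfl | hlt
                · exact le_refl _
                · exact le_of_lt (hs.2 _ _ hlt (by rw [hfi, hfj]))
              exact hhead (σ j) hσij
          have hsub : (Finset.Iic i).image σ ⊆ Finset.univ.filter fun p => w p = 0 := by
            intro p hp
            simp only [Finset.mem_image, Finset.mem_Iic] at hp
            obtain ⟨j, hj, rfl⟩ := hp
            simp only [Finset.mem_filter, Finset.mem_univ, true_and]
            exact hall j hj
          have hc := Finset.card_le_card hsub
          rw [Finset.card_image_of_injective _ σ.injective, Fin.card_Iic, hw0] at hc
          omega
    · -- C2 case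
      have hkn : n ≤ k := by
        have hle : (Finset.univ.filter fun p => f p = 1).card ≤
            (Finset.univ.filter fun p => w p = 1).card := by
          apply Finset.card_le_card
          intro p hp
          simp only [Finset.mem_filter, Finset.mem_univ, true_and] at hp ⊢
          exact h1 p hp
        omega
      by_cases hik : (i : ℕ) < k
      · have hfi : f (σ i) = 0 := (hk0 i).mpr hik
        by_cases hin : (i : ℕ) < n
        · rw [if_pos hin]
          by_contra hne
          have hwi : w (σ i) = 1 := by rcases fin2 (w (σ i)) with h | h; exact absurd h hne; exact h
          have htail := h2 (σ i) hfi hwi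
          have hall : ∀ j : Fin (2 * n), i ≤ j → w (σ j) = 1 := by
            intro j hij
            by_cases hjk : (j : ℕ) < k
            · have hfj : f (σ j) = 0 := (hk0 j).mpr hjk
              have hσij : σ i ≤ σ j := by
                rcases eq_or_lt_of_le hij with rfl | hlt
                · exact le_refl _
                · exact le_of_lt (hs.2 _ _ hlt (by rw [hfi, hfj]))
              exact htail (σ j) hσij
            · exact h1 _ ((hk1 j).mpr hjk)
          have hsub : (Finset.Ici i).image σ ⊆ Finset.univ.filter fun p => w p = 1 := by
            intro p hp
            simp only [Finset.mem_image, Finset.mem_Ici] at hp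
            obtain ⟨j, hj, rfl⟩ := hp
            simp only [Finset.mem_filter, Finset.mem_univ, true_and]
            exact hall j hj
          have hc := Finset.card_le_card hsub
          rw [Finset.card_image_of_injective _ σ.injective, Fin.card_Ici, hw1] at hc
          omega
        · rw [if_neg hin]
          by_contra hne
          have hwi : w (σ i) = 0 := by rcases fin2 (w (σ i)) with h | h; exact h; exact absurd h hne
          have hall : ∀ j : Fin (2 * n), j ≤ i → w (σ j) = 0 := by
            intro j hij
            have hjk : (j : ℕ) < k := by have := Fin.le_def.mp hij; omega
            have hfj : f (σ j) = 0 := (hk0 j).mpr hjk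
            rcases fin2 (w (σ j)) with hwj | hwj
            · exact hwj
            · exfalso
              have hσij : σ j ≤ σ i := by
                rcases eq_or_lt_of_le hij with rfl | hlt
                · exact le_refl _
                · exact le_of_lt (hs.2 _ _ hlt (by rw [hfi, hfj]))
              have := h2 (σ j) hfj hwj (σ i) hσij
              rw [this] at hwi
              exact absurd hwi (by decide)
          have hsub : (Finset.Iic i).image σ ⊆ Finset.univ.filter fun p => w p = 0 := by
            intro p hp
            simp only [Finset.mem_image, Finset.mem_Iic] at hp
            obtain ⟨j, hj, rfl⟩ := hp
            simp only [Finset.mem_filter, Finset.mem_univ, true_and]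
            exact hall j hj
          have hc := Finset.card_le_card hsub
          rw [Finset.card_image_of_injective _ σ.injective, Fin.card_Iic, hw0] at hc
          omega
      · rw [if_neg (by omega)]
        exact h1 _ ((hk1 i).mpr hik)

lemma fin2' (x : Fin 2) : x = 0 ∨ x = 1 := by omega

open Classical in
lemma card_C1 {N : ℕ} (w : Fin N → Fin 2) :
    (Finset.univ.filter fun f : Fin N → Fin 2 => C1 w f).card = 2 ^ headRun w := by
  rw [headRun, ← Finset.card_powerset]
  refine Finset.card_bij'
    (fun f _ => Finset.univ.filter fun p => f p = 1 ∧ w p = 0)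
    (fun S _ => fun p => if w p = 0 ∧ p ∉ S then 0 else 1) ?_ ?_ ?_ ?_
  · intro f hf
    simp only [Finset.mem_filter, Finset.mem_univ, true_and] at hf
    rw [Finset.mem_powerset]
    intro p hp
    simp only [Finset.mem_filter, Finset.mem_univ, true_and] at hp ⊢
    exact hf.2 p hp.1 hp.2
  · intro S hS
    rw [Finset.mem_powerset] at hS
    simp only [Finset.mem_filter, Finset.mem_univ, true_and]
    constructor
    · intro p hp
      have hp' : (if w p = 0 ∧ p ∉ S then (0:Fin 2) else 1) = 0 := hp
      by_cases h : w p = 0 ∧ p ∉ S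
      · exact h.1
      · rw [if_neg h] at hp'; exact absurd hp' (by decide)
    · intro p hp hwp k hk
      have hp' : (if w p = 0 ∧ p ∉ S then (0:Fin 2) else 1) = 1 := hp
      by_cases h : w p = 0 ∧ p ∉ S
      · rw [if_pos h] at hp'; exact absurd hp' (by decide)
      · push_neg at h
        have hpS : p ∈ S := h hwp
        have := hS hpS
        simp only [Finset.mem_filter, Finset.mem_univ, true_and] at this
        exact this k hk
  · intro f hf
    simp only [Finset.mem_filter, Finset.mem_univ, true_and] at hf
    funext p
    simp only [Finset.mem_filter, Finset.mem_univ, true_and]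
    by_cases h : w p = 0 ∧ ¬(f p = 1 ∧ w p = 0)
    · rw [if_pos (by simpa using h)]
      rcases fin2' (f p) with h' | h'
      · exact h'.symm
      · exact absurd ⟨h', h.1⟩ h.2
    · rw [if_neg (by simpa using h)]
      push_neg at h
      rcases fin2' (f p) with h' | h'
      · exfalso
        have hww : w p = 0 := hf.1 p h'
        have := (h hww).1
        rw [h'] at this
        exact absurd this (by decide)
      · exact h'.symm
  · intro S hS
    rw [Finset.mem_powerset] at hS
    ext p
    simp only [Finset.mem_filter, Finset.mem_univ, true_and]
    constructor
    · rintro ⟨h1, h2⟩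
      by_cases h : w p = 0 ∧ p ∉ S
      · rw [if_pos h] at h1; exact absurd h1 (by decide)
      · push_neg at h; exact h h2
    · intro hp
      have hwp : w p = 0 := by
        have := hS hp
        simp only [Finset.mem_filter, Finset.mem_univ, true_and] at this
        exact this p le_rfl
      exact ⟨by rw [if_neg (by simp [hp])], hwp⟩

open Classical in
lemma card_C2 {N : ℕ} (w : Fin N → Fin 2) :
    (Finset.univ.filter fun f : Fin N → Fin 2 => C2 w f).card = 2 ^ tailRun w := by
  rw [tailRun, ← Finset.card_powerset]
  refine Finset.card_bij'
    (fun f _ => Finset.univ.filter fun p => f p = 0 ∧ w p = 1)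
    (fun S _ => fun p => if w p = 1 ∧ p ∉ S then 1 else 0) ?_ ?_ ?_ ?_
  · intro f hf
    simp only [Finset.mem_filter, Finset.mem_univ, true_and] at hf
    rw [Finset.mem_powerset]
    intro p hp
    simp only [Finset.mem_filter, Finset.mem_univ, true_and] at hp ⊢
    exact hf.2 p hp.1 hp.2
  · intro S hS
    rw [Finset.mem_powerset] at hS
    simp only [Finset.mem_filter, Finset.mem_univ, true_and]
    constructor
    · intro p hp
      have hp' : (if w p = 1 ∧ p ∉ S then (1:Fin 2) else 0) = 1 := hp
      by_cases h : w p = 1 ∧ p ∉ S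
      · exact h.1
      · rw [if_neg h] at hp'; exact absurd hp' (by decide)
    · intro p hp hwp k hk
      have hp' : (if w p = 1 ∧ p ∉ S then (1:Fin 2) else 0) = 0 := hp
      by_cases h : w p = 1 ∧ p ∉ S
      · rw [if_pos h] at hp'; exact absurd hp' (by decide)
      · push_neg at h
        have hpS : p ∈ S := h hwp
        have := hS hpS
        simp only [Finset.mem_filter, Finset.mem_univ, true_and] at this
        exact this k hk
  · intro f hf
    simp only [Finset.mem_filter, Finset.mem_univ, true_and] at hf
    funext p
    simp only [Finset.mem_filter, Finset.mem_univ, true_and]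
    by_cases h : w p = 1 ∧ ¬(f p = 0 ∧ w p = 1)
    · rw [if_pos (by simpa using h)]
      rcases fin2' (f p) with h' | h'
      · exact absurd ⟨h', h.1⟩ h.2
      · exact h'.symm
    · rw [if_neg (by simpa using h)]
      push_neg at h
      rcases fin2' (f p) with h' | h'
      · exact h'.symm
      · exfalso
        have hww : w p = 1 := hf.1 p h'
        have := (h hww).1
        rw [h'] at this
        exact absurd this (by decide)
  · intro S hS
    rw [Finset.mem_powerset] at hS
    ext p
    simp only [Finset.mem_filter, Finset.mem_univ, true_and]
    constructor
    · rintro ⟨h1, h2⟩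
      by_cases h : w p = 1 ∧ p ∉ S
      · rw [if_pos h] at h1; exact absurd h1 (by decide)
      · push_neg at h; exact h h2
    · intro hp
      have hwp : w p = 1 := by
        have := hS hp
        simp only [Finset.mem_filter, Finset.mem_univ, true_and] at this
        exact this p le_rfl
      exact ⟨by rw [if_neg (by simp [hp])], hwp⟩

open Classical in
lemma inter_C1_C2 {N : ℕ} (w : Fin N → Fin 2) :
    (Finset.univ.filter fun f : Fin N → Fin 2 => C1 w f ∧ C2 w f) = {w} := by
  ext f
  simp only [Finset.mem_filter, Finset.mem_univ, true_and, Finset.mem_singleton]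
  constructor
  · rintro ⟨⟨h1, _⟩, ⟨h3, _⟩⟩
    funext p
    rcases fin2' (f p) with h | h
    · rw [h]; exact (h1 p h).symm
    · rw [h]; exact (h3 p h).symm
  · rintro rfl
    refine ⟨⟨fun p h => h, fun p h1 h0 => ?_⟩, ⟨fun p h => h, fun p h0 h1 => ?_⟩⟩
    · rw [h1] at h0; exact absurd h0 (by decide)
    · rw [h0] at h1; exact absurd h1 (by decide)

/-- The chance of obtaining the deck `w` from a single GSR `2`-shuffle of a deck of `n` red
cards atop `n` black cards is `Q_2(w) = (2^{h(w)} + 2^{t(w)} - 1)/2^{2n}`, where `h(w)` is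
the number of reds before the first black and `t(w)` is the number of blacks after the
final red. -/
theorem two_shuffle_red_black_prob (n : ℕ) (hn : 1 ≤ n)
    (σ : (Fin (2 * n) → Fin 2) → Equiv.Perm (Fin (2 * n)))
    (hσ : ∀ f, IsStableSort f (σ f))
    (v : Fin (2 * n) → Fin 2) (hv : ∀ p : Fin (2 * n), v p = if (p : ℕ) < n then 0 else 1)
    (w : Fin (2 * n) → Fin 2)
    (hw0 : (Finset.univ.filter fun p => w p = 0).card = n)
    (hw1 : (Finset.univ.filter fun p => w p = 1).card = n) :
    ((Finset.univ.filter fun f : Fin (2 * n) → Fin 2 => w ∘ σ f = v).card : ℚ)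
        / 2 ^ (2 * n)
      = ((2 ^ headRun w + 2 ^ tailRun w - 1 : ℚ)) / 2 ^ (2 * n) := by
  classical
  have key : (Finset.univ.filter fun f : Fin (2 * n) → Fin 2 => w ∘ σ f = v).card
      = 2 ^ headRun w + 2 ^ tailRun w - 1 := by
    have hfilter : (Finset.univ.filter fun f : Fin (2 * n) → Fin 2 => w ∘ σ f = v)
        = Finset.univ.filter fun f => C1 w f ∨ C2 w f := by
      apply Finset.filter_congr
      intro f _
      exact cond_iff hn (hσ f) hv hw0 hw1
    rw [hfilter, Finset.filter_or, Finset.card_union, ← Finset.filter_and,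
      inter_C1_C2, Finset.card_singleton, card_C1, card_C2]
  rw [key]
  congr 1
  have h1 : (1:ℕ) ≤ 2 ^ headRun w + 2 ^ tailRun w := le_trans Nat.one_le_two_pow (Nat.le_add_right _ _)
  push_cast [Nat.cast_sub h1]
  ring
end

section
/- For each n ≥ 1 let v_n : {1,…,2n} → {1,2} be the deck with n cards labelled 1 on top of n cards labelled 2, and let TV(n) = (1/2) ∑_w |Q_2^{v_n}(w) − 1/C(2n,n)|, the total variation distance to uniform after a single GSR 2-shuffle, where the sum is over all decks w with exactly n entries equal to 1 and n equal to 2. Then TV(n) → 1 as n → ∞. -/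
open Finset Filter Topology

section TotalVariation

variable {ι : Type*} {s t : Finset ι} {P U : ι → ℝ}

theorem sub_le_half_sum_abs_sub (hts : t ⊆ s) (hP : ∑ i ∈ s, P i = 1)
    (hU : ∑ i ∈ s, U i = 1) :
    ∑ i ∈ t, P i - ∑ i ∈ t, U i ≤ 1 / 2 * ∑ i ∈ s, |P i - U i| := by
  classical
  rw [← sum_sdiff hts] at hP hU ⊢
  have ht : ∑ i ∈ t, (P i - U i) ≤ ∑ i ∈ t, |P i - U i| :=
    sum_le_sum fun i _ => le_abs_self _
  have hst : ∑ i ∈ s \ t, (U i - P i) ≤ ∑ i ∈ s \ t, |P i - U i| :=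
    sum_le_sum fun i _ => abs_sub_comm (P i) (U i) ▸ le_abs_self _
  rw [sum_sub_distrib] at ht hst
  linarith

theorem half_sum_abs_sub_le_one (hP0 : ∀ i ∈ s, 0 ≤ P i) (hU0 : ∀ i ∈ s, 0 ≤ U i)
    (hP : ∑ i ∈ s, P i = 1) (hU : ∑ i ∈ s, U i = 1) :
    1 / 2 * ∑ i ∈ s, |P i - U i| ≤ 1 := by
  have : ∑ i ∈ s, |P i - U i| ≤ ∑ i ∈ s, (P i + U i) :=
    sum_le_sum fun i hi => abs_sub_le_iff.2 ⟨by linarith [hU0 i hi], by linarith [hP0 i hi]⟩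
  rw [sum_add_distrib, hP, hU] at this
  linarith

end TotalVariation

section Binomial

theorem Nat.centralBinom_sq_mul_le (n : ℕ) : centralBinom n ^ 2 * (2 * n + 1) ≤ 16 ^ n := by
  induction n with
  | zero => simp
  | succ n ih =>
    refine Nat.le_of_mul_le_mul_left ?_ (by positivity : 0 < (n + 1) ^ 2)
    calc (n + 1) ^ 2 * (centralBinom (n + 1) ^ 2 * (2 * (n + 1) + 1))
        = ((n + 1) * centralBinom (n + 1)) ^ 2 * (2 * n + 3) := by ring
      _ = 4 * (2 * n + 1) * (2 * n + 3) * (centralBinom n ^ 2 * (2 * n + 1)) := by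
        rw [succ_mul_centralBinom_succ]; ring
      _ ≤ 16 * (n + 1) ^ 2 * 16 ^ n := Nat.mul_le_mul (by nlinarith) ih
      _ = (n + 1) ^ 2 * 16 ^ (n + 1) := by ring

theorem tendsto_centralBinom_div_four_pow :
    Tendsto (fun n : ℕ => (n.centralBinom : ℝ) / 4 ^ n) atTop (𝓝 0) := by
  have hsq : Tendsto (fun n : ℕ => ((n.centralBinom : ℝ) / 4 ^ n) ^ 2) atTop (𝓝 0) := by
    refine squeeze_zero (fun n => by positivity) (fun n => ?_)
      (tendsto_one_div_add_atTop_nhds_zero_nat.comp (tendsto_id.const_mul_atTop' two_pos))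
    have h := Nat.centralBinom_sq_mul_le n
    simp only [Function.comp_apply, id]
    rw [div_pow, div_le_div_iff₀ (by positivity) (by positivity), ← pow_mul, one_mul,
      mul_comm n 2, pow_mul]
    norm_num
    exact_mod_cast h
  have h := hsq.sqrt
  rw [Real.sqrt_zero] at h
  exact h.congr fun n => Real.sqrt_sq (by positivity)

theorem Nat.two_mul_choose_le_choose_succ {L n : ℕ} (h : L + 1 ≤ 2 * n) :
    2 * L.choose n ≤ (L + 1).choose n := by
  refine Nat.le_of_mul_le_mul_right ?_ L.succ_pos
  calc 2 * L.choose n * (L + 1) = (L + 1).choose n * (2 * (L + 1 - n)) := by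
        rw [mul_assoc, Nat.choose_mul_succ_eq]; ring
    _ ≤ (L + 1).choose n * (L + 1) := Nat.mul_le_mul_left _ (by omega)

theorem Nat.two_pow_mul_choose_sub_le {n m : ℕ} (hm : m ≤ n) :
    2 ^ m * (2 * n - m).choose n ≤ (2 * n).choose n := by
  induction m with
  | zero => simp
  | succ m ih =>
    calc 2 ^ (m + 1) * (2 * n - (m + 1)).choose n
        = 2 ^ m * (2 * (2 * n - (m + 1)).choose n) := by ring
      _ ≤ 2 ^ m * (2 * n - (m + 1) + 1).choose n :=
        Nat.mul_le_mul_left _ (Nat.two_mul_choose_le_choose_succ (by omega))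
      _ = 2 ^ m * (2 * n - m).choose n := by rw [show 2 * n - (m + 1) + 1 = 2 * n - m by omega]
      _ ≤ (2 * n).choose n := ih (by omega)

end Binomial

section TwoColourings

variable {α : Type*} [Fintype α]

theorem card_eq_zero_add_card_eq_one (w : α → Fin 2) :
    #{p | w p = 0} + #{p | w p = 1} = Fintype.card α := by
  have hone : #{p | w p = 1} = #{p | ¬w p = 0} :=
    congrArg card (filter_congr fun p _ => by omega)
  rw [hone, card_filter_add_card_filter_not, card_univ]

variable [DecidableEq α]

def levelSetEquiv (c : Fin 2) : (α → Fin 2) ≃ Finset α where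
  toFun w := {p | w p = c}
  invFun s p := if p ∈ s then c else c.rev
  left_inv w := funext fun p => by
    by_cases h : w p = c
    · simp [h]
    · simp only [mem_filter, mem_univ, true_and, h, if_false]
      have := Fin.val_rev c
      omega
  right_inv s := by
    ext p
    by_cases h : p ∈ s
    · simp [h]
    · simp only [mem_filter, mem_univ, true_and, h, if_false, iff_false]
      have := Fin.val_rev c
      omega

theorem card_filter_card_levelSet_eq_choose (c : Fin 2) (T : Finset α) (j : ℕ) :
    #{w : α → Fin 2 | #{p | w p = c} = j ∧ ∀ p ∈ T, w p ≠ c} =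
      (Fintype.card α - #T).choose j := by
  rw [← card_compl, ← card_powersetCard]
  refine card_equiv (levelSetEquiv c) fun w => ?_
  simp only [levelSetEquiv, Equiv.coe_fn_mk, mem_filter, mem_univ, true_and, mem_powersetCard,
    subset_iff, mem_compl]
  exact ⟨fun h => ⟨fun p hp hpT => h.2 p hpT hp, h.1⟩, fun h => ⟨h.2, fun p hpT hp => h.1 hp hpT⟩⟩

end TwoColourings

namespace IsStableSort

variable {N : ℕ} {f : Fin N → Fin 2} {e : Equiv.Perm (Fin N)}

theorem lt_card_iff_apply_eq_zero (hs : IsStableSort f e) (i : Fin N) :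
    (i : ℕ) < #{p | f p = 0} ↔ f (e i) = 0 := by
  have hcard : #{j | f (e j) = 0} = #{p | f p = 0} := card_equiv e (by simp)
  rw [← hcard]
  exact Fin.lt_card_filter_univ_iff_apply_of_imp _ fun i j hji hi =>
    Fin.le_zero_iff.1 (hi ▸ hs.1 hji)

theorem symm_apply_le (hs : IsStableSort f e) (p : Fin N) :
    (e.symm p : ℕ) ≤ p + #{q | f q = 0} := by
  set k := #{q | f q = 0}
  set i := e.symm p
  rcases lt_or_ge (i : ℕ) k with hik | hki
  · omega
  have hfi : f (e i) ≠ 0 := fun h => by have := (hs.lt_card_iff_apply_eq_zero i).2 h; omega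
  -- stability: the sorted positions `k, …, i - 1` carry label `1` like `i`, so land before `p`
  have hinj : #(Ico (⟨k, hki.trans_lt i.2⟩ : Fin N) i) ≤ #(Iio p) := by
    refine card_le_card_of_injOn e (fun j hj => ?_) e.injective.injOn
    simp only [mem_coe, mem_Ico, Fin.le_def] at hj
    have hfj : f (e j) ≠ 0 := fun h => by have := (hs.lt_card_iff_apply_eq_zero j).2 h; omega
    simpa [i] using hs.2 j i hj.2 (by omega)
  simp only [Fin.card_Ico, Fin.card_Iio] at hinj
  omega

theorem add_le_symm_apply (hs : IsStableSort f e) (p : Fin N) :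
    (p : ℕ) + #{q | f q = 0} ≤ e.symm p + N := by
  set k := #{q | f q = 0}
  set i := e.symm p
  rcases le_or_gt k (i : ℕ) with hki | hik
  · omega
  have hkN : k ≤ N := (card_filter_le _ _).trans (by simp)
  have hfi : f (e i) = 0 := (hs.lt_card_iff_apply_eq_zero i).1 hik
  -- stability: the sorted positions `i + 1, …, k - 1` carry label `0` like `i`, so land after `p`
  have hinj : #(Ioc i (⟨k - 1, by omega⟩ : Fin N)) ≤ #(Ioi p) := by
    refine card_le_card_of_injOn e (fun j hj => ?_) e.injective.injOn
    simp only [mem_coe, mem_Ioc, Fin.le_def] at hj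
    have hfj : f (e j) = 0 := (hs.lt_card_iff_apply_eq_zero j).1 (by omega)
    simpa [i] using hs.2 i j hj.1 (by rw [hfi, hfj])
  simp only [Fin.card_Ioc, Fin.card_Ioi] at hinj
  omega

end IsStableSort

/-- Labels `0` and `1` stand for the cards `1` (red) and `2` (black) of the informal statement. -/
def redBlack (n : ℕ) : Fin (2 * n) → Fin 2 := fun p => if (p : ℕ) < n then 0 else 1

def balancedDecks (n : ℕ) : Finset (Fin (2 * n) → Fin 2) :=
  {w | #{p | w p = 0} = n ∧ #{p | w p = 1} = n}

def redTopOrBlackBottom (n m : ℕ) : Finset (Fin (2 * n) → Fin 2) :=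
  {w | (∀ p : Fin (2 * n), (p : ℕ) < m → w p = 0) ∨
    ∀ p : Fin (2 * n), 2 * n - m ≤ (p : ℕ) → w p = 1}

/-- `Q_2^{v_n}(w)` for the deck `v_n = redBlack n`, `σ f` being the stable sort of `f`. -/
noncomputable def shuffleProb {n : ℕ} (σ : (Fin (2 * n) → Fin 2) → Equiv.Perm (Fin (2 * n)))
    (w : Fin (2 * n) → Fin 2) : ℝ :=
  #{f | w ∘ σ f = redBlack n} / 2 ^ (2 * n)

section Decks

variable {n : ℕ}

theorem mem_balancedDecks_iff {w : Fin (2 * n) → Fin 2} :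
    w ∈ balancedDecks n ↔ #{p | w p = 0} = n := by
  have := card_eq_zero_add_card_eq_one w
  simp only [balancedDecks, mem_filter, mem_univ, true_and, Fintype.card_fin] at this ⊢
  omega

theorem card_balancedDecks (n : ℕ) : #(balancedDecks n) = (2 * n).choose n := by
  have h := card_filter_card_levelSet_eq_choose (α := Fin (2 * n)) 0 ∅ n
  simp only [notMem_empty, IsEmpty.forall_iff, implies_true, and_true, card_empty,
    Fintype.card_fin, Nat.sub_zero] at h
  rw [← h]
  congr 1
  ext w
  simp [mem_balancedDecks_iff]

theorem redBlack_comp_mem_balancedDecks (e : Equiv.Perm (Fin (2 * n))) :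
    redBlack n ∘ e ∈ balancedDecks n := by
  have h : #{p : Fin (2 * n) | (p : ℕ) < n} = n := Fin.card_filter_val_lt.trans (by omega)
  rw [mem_balancedDecks_iff]
  exact (card_equiv e (by simp [redBlack])).trans h

theorem card_balancedDecks_inter_redTopOrBlackBottom_le {m : ℕ} (hm : m ≤ n) :
    #(balancedDecks n ∩ redTopOrBlackBottom n m) ≤ 2 * (2 * n - m).choose n := by
  set top : Finset (Fin (2 * n)) := {p | (p : ℕ) < m}
  set bottom : Finset (Fin (2 * n)) := ({p | (p : ℕ) < 2 * n - m} : Finset (Fin (2 * n)))ᶜ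
  have hsub : balancedDecks n ∩ redTopOrBlackBottom n m ⊆
      ({w | #{p | w p = 1} = n ∧ ∀ p ∈ top, w p ≠ 1} : Finset (Fin (2 * n) → Fin 2)) ∪
        ({w | #{p | w p = 0} = n ∧ ∀ p ∈ bottom, w p ≠ 0} : Finset (Fin (2 * n) → Fin 2)) := by
    intro w hw
    simp only [balancedDecks, redTopOrBlackBottom, mem_inter, mem_filter, mem_univ, true_and]
      at hw
    simp only [mem_union, mem_filter, mem_univ, true_and, top, bottom, mem_compl, not_lt]
    rcases hw.2 with h | h
    · exact Or.inl ⟨hw.1.2, fun p hp => by rw [h p hp]; decide⟩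
    · exact Or.inr ⟨hw.1.1, fun p hp => by rw [h p hp]; decide⟩
  have htop : #top = m := Fin.card_filter_val_lt.trans (by omega)
  have hbottom : #bottom = m := by
    rw [card_compl, Fintype.card_fin, Fin.card_filter_val_lt]
    omega
  calc _ ≤ _ := card_le_card hsub
    _ ≤ _ := card_union_le _ _
    _ = (2 * n - #top).choose n + (2 * n - #bottom).choose n := by
      simpa using congrArg₂ (· + ·) (card_filter_card_levelSet_eq_choose 1 top n)
        (card_filter_card_levelSet_eq_choose 0 bottom n)
    _ = 2 * (2 * n - m).choose n := by rw [htop, hbottom]; ring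

theorem IsStableSort.redBlack_comp_symm_mem_redTopOrBlackBottom {m : ℕ} (hm : m ≤ n)
    {f : Fin (2 * n) → Fin 2} {e : Equiv.Perm (Fin (2 * n))} (hs : IsStableSort f e)
    (hf : #{q | f q = 0} ∉ Ioo (n - m) (n + m)) :
    redBlack n ∘ e.symm ∈ redTopOrBlackBottom n m := by
  simp only [mem_Ioo, not_and_or, not_lt] at hf
  simp only [redTopOrBlackBottom, mem_filter, mem_univ, true_and, Function.comp_apply, redBlack]
  by_cases hk : #{q | f q = 0} ≤ n - m
  · refine Or.inl fun p hp => if_pos ?_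
    have := hs.symm_apply_le p
    omega
  · refine Or.inr fun p hp => if_neg ?_
    have := hs.add_le_symm_apply p
    omega

theorem sum_uniform_balancedDecks (n : ℕ) :
    ∑ _w ∈ balancedDecks n, 1 / ((2 * n).choose n : ℝ) = 1 := by
  have hC : ((2 * n).choose n : ℝ) ≠ 0 := by exact_mod_cast (Nat.choose_pos (by omega)).ne'
  rw [sum_const, card_balancedDecks, nsmul_eq_mul, mul_one_div_cancel hC]

theorem sum_uniform_redTopOrBlackBottom_le {m : ℕ} (hm : m ≤ n) :
    ∑ _w ∈ balancedDecks n ∩ redTopOrBlackBottom n m, 1 / ((2 * n).choose n : ℝ) ≤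
      2 * (1 / 2) ^ m := by
  have hcard : #(balancedDecks n ∩ redTopOrBlackBottom n m) * 2 ^ m ≤ 2 * (2 * n).choose n :=
    calc _ ≤ 2 * (2 * n - m).choose n * 2 ^ m :=
          Nat.mul_le_mul_right _ (card_balancedDecks_inter_redTopOrBlackBottom_le hm)
      _ = 2 * (2 ^ m * (2 * n - m).choose n) := by ring
      _ ≤ 2 * (2 * n).choose n := Nat.mul_le_mul_left 2 (Nat.two_pow_mul_choose_sub_le hm)
  have hcardR : (#(balancedDecks n ∩ redTopOrBlackBottom n m) : ℝ) * 2 ^ m ≤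
      2 * (2 * n).choose n := by exact_mod_cast hcard
  have hC : (0 : ℝ) < (2 * n).choose n := by exact_mod_cast Nat.choose_pos (by omega)
  rw [sum_const, nsmul_eq_mul]
  calc (#(balancedDecks n ∩ redTopOrBlackBottom n m) : ℝ) * (1 / (2 * n).choose n)
      = #(balancedDecks n ∩ redTopOrBlackBottom n m) * 2 ^ m / (2 ^ m * (2 * n).choose n) := by
        field_simp
    _ ≤ 2 * (2 * n).choose n / (2 ^ m * (2 * n).choose n) := by gcongr
    _ = 2 * (1 / 2) ^ m := by field_simp; rw [← mul_pow]; norm_num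

end Decks

section Shuffle

variable {n : ℕ} (σ : (Fin (2 * n) → Fin 2) → Equiv.Perm (Fin (2 * n)))

theorem shuffleProb_nonneg (w : Fin (2 * n) → Fin 2) : 0 ≤ shuffleProb σ w := by
  unfold shuffleProb
  positivity

theorem sum_shuffleProb (s : Finset (Fin (2 * n) → Fin 2)) :
    ∑ w ∈ s, shuffleProb σ w = #{f | redBlack n ∘ (σ f).symm ∈ s} / 4 ^ n := by
  have hcount : ∑ w ∈ s, #{f | w ∘ σ f = redBlack n} = #{f | redBlack n ∘ (σ f).symm ∈ s} := by
    rw [← sum_card_fiberwise_eq_card_filter]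
    refine sum_congr rfl fun w _ => congrArg card (filter_congr fun f _ => ?_)
    rw [Equiv.comp_symm_eq, eq_comm]
  rw [← hcount, Nat.cast_sum, sum_div]
  refine sum_congr rfl fun w _ => ?_
  rw [shuffleProb, pow_mul]
  norm_num

theorem sum_shuffleProb_balancedDecks : ∑ w ∈ balancedDecks n, shuffleProb σ w = 1 := by
  rw [sum_shuffleProb, filter_true_of_mem fun f _ => redBlack_comp_mem_balancedDecks _,
    card_univ, Fintype.card_fun, Fintype.card_fin, Fintype.card_fin, pow_mul]
  norm_num

variable {σ}

theorem card_redBlack_comp_symm_notMem_le (hσ : ∀ f, IsStableSort f (σ f)) {m : ℕ}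
    (hm : m ≤ n) :
    #{f | redBlack n ∘ (σ f).symm ∉ redTopOrBlackBottom n m} ≤ 2 * m * n.centralBinom :=
  calc #{f | redBlack n ∘ (σ f).symm ∉ redTopOrBlackBottom n m}
      ≤ #{f : Fin (2 * n) → Fin 2 | #{q | f q = 0} ∈ Ioo (n - m) (n + m)} :=
        card_le_card <| monotone_filter_right _ fun f _ hf => by
          by_contra hk
          exact hf ((hσ f).redBlack_comp_symm_mem_redTopOrBlackBottom hm hk)
    _ = ∑ j ∈ Ioo (n - m) (n + m), (2 * n).choose j := by
        rw [← sum_card_fiberwise_eq_card_filter]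
        refine sum_congr rfl fun j _ => ?_
        simpa using card_filter_card_levelSet_eq_choose (α := Fin (2 * n)) 0 ∅ j
    _ ≤ ∑ j ∈ Ioo (n - m) (n + m), n.centralBinom :=
        sum_le_sum fun j _ => Nat.choose_le_centralBinom j n
    _ ≤ 2 * m * n.centralBinom := by
        rw [sum_const, Nat.card_Ioo, smul_eq_mul]
        gcongr
        omega

theorem one_sub_le_sum_shuffleProb_redTopOrBlackBottom (hσ : ∀ f, IsStableSort f (σ f))
    {m : ℕ} (hm : m ≤ n) :
    1 - 2 * m * ((n.centralBinom : ℝ) / 4 ^ n) ≤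
      ∑ w ∈ balancedDecks n ∩ redTopOrBlackBottom n m, shuffleProb σ w := by
  have hsplit := card_filter_add_card_filter_not (s := univ)
    fun f => redBlack n ∘ (σ f).symm ∈ redTopOrBlackBottom n m
  rw [card_univ, Fintype.card_fun, Fintype.card_fin, Fintype.card_fin, pow_mul] at hsplit
  have hsplitR : (#{f | redBlack n ∘ (σ f).symm ∈ redTopOrBlackBottom n m} : ℝ) +
      #{f | redBlack n ∘ (σ f).symm ∉ redTopOrBlackBottom n m} = 4 ^ n := by
    exact_mod_cast hsplit
  have hbad : (#{f | redBlack n ∘ (σ f).symm ∉ redTopOrBlackBottom n m} : ℝ) ≤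
      2 * m * n.centralBinom := by exact_mod_cast card_redBlack_comp_symm_notMem_le hσ hm
  have hinter : #{f | redBlack n ∘ (σ f).symm ∈ balancedDecks n ∩ redTopOrBlackBottom n m} =
      #{f | redBlack n ∘ (σ f).symm ∈ redTopOrBlackBottom n m} :=
    congrArg card <| filter_congr fun f _ => by
      simp [mem_inter, redBlack_comp_mem_balancedDecks]
  rw [sum_shuffleProb, hinter, le_div_iff₀ (by positivity), sub_mul, one_mul,
    mul_assoc, div_mul_cancel₀ _ (by positivity)]
  linarith

theorem one_sub_le_half_sum_abs_sub_shuffleProb (hσ : ∀ f, IsStableSort f (σ f)) {m : ℕ}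
    (hm : m ≤ n) :
    1 - 2 * (1 / 2) ^ m - 2 * m * ((n.centralBinom : ℝ) / 4 ^ n) ≤
      1 / 2 * ∑ w ∈ balancedDecks n, |shuffleProb σ w - 1 / (2 * n).choose n| := by
  linarith [one_sub_le_sum_shuffleProb_redTopOrBlackBottom hσ hm,
    sum_uniform_redTopOrBlackBottom_le (n := n) hm,
    sub_le_half_sum_abs_sub (t := balancedDecks n ∩ redTopOrBlackBottom n m) inter_subset_left
      (sum_shuffleProb_balancedDecks σ) (sum_uniform_balancedDecks n)]

end Shuffle

/-- The total variation distance from uniform after a single GSR `2`-shuffle of a deck of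
`n` red cards atop `n` black cards tends to `1` as `n → ∞`. -/
theorem two_shuffle_red_black_TV_tendsto_one
    (σ : ∀ n : ℕ, (Fin (2 * n) → Fin 2) → Equiv.Perm (Fin (2 * n)))
    (hσ : ∀ n f, IsStableSort f (σ n f))
    (v : ∀ n : ℕ, Fin (2 * n) → Fin 2)
    (hv : ∀ n (p : Fin (2 * n)), v n p = if (p : ℕ) < n then 0 else 1) :
    Filter.Tendsto (fun n : ℕ =>
        ((1 : ℝ) / 2) * ∑ w ∈ Finset.univ.filter (fun w : Fin (2 * n) → Fin 2 =>
            (Finset.univ.filter fun p => w p = 0).card = n ∧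
            (Finset.univ.filter fun p => w p = 1).card = n),
          |((Finset.univ.filter fun f : Fin (2 * n) → Fin 2 => w ∘ σ n f = v n).card : ℝ)
              / 2 ^ (2 * n) - 1 / (Nat.choose (2 * n) n : ℝ)|)
      Filter.atTop (nhds 1) := by
  obtain rfl : v = redBlack := funext fun n => funext (hv n)
  refine tendsto_order.2 ⟨fun a ha => ?_, fun b hb => Eventually.of_forall fun n =>
    (half_sum_abs_sub_le_one (fun w _ => shuffleProb_nonneg (σ n) w) (fun w _ => by positivity)
      (sum_shuffleProb_balancedDecks (σ n)) (sum_uniform_balancedDecks n)).trans_lt hb⟩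
  obtain ⟨m, hm⟩ := exists_pow_lt_of_lt_one (by linarith : 0 < (1 - a) / 4)
    (by norm_num : (1 / 2 : ℝ) < 1)
  have hsmall : ∀ᶠ n in atTop, 2 * m * ((n.centralBinom : ℝ) / 4 ^ n) < (1 - a) / 2 :=
    (tendsto_centralBinom_div_four_pow.const_mul _).eventually
      (gt_mem_nhds (by rw [mul_zero]; linarith))
  filter_upwards [hsmall, eventually_ge_atTop m] with n hn hmn
  exact lt_of_lt_of_le (by linarith) (one_sub_le_half_sum_abs_sub_shuffleProb (hσ n) hmn)
end

section
/- Fix a natural number k ≥ 1 and define f_k(z) = ∑_{r=0}^{∞} r^k z^r for real 0 < z < 1. Then as z → 1 from below, f_k(z) − k!/ (log(1/z))^{k+1} converges to ζ(−k), the value of the Riemann zeta function at −k; equivalently, f_k(z) = (k!/(1−z)^{k+1})·((z−1)/log z)^{k+1} + ζ(−k) + O(1−z) as z → 1⁻. -/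
/-!
Put `φ(t) = 1/(eᵗ - 1) - 1/t` and `z = e⁻ᵗ`. Since `1 + φ(t) = f₀(e⁻ᵗ) - 1/t` and
`d/dt f_j(e⁻ᵗ) = -f_{j+1}(e⁻ᵗ)`, for `k ≥ 1` the `k`-th derivative of `φ` is
`(-1)ᵏ (f_k(e⁻ᵗ) - k!/t^(k+1))` on `0 < t < 1`. On the other hand `φ` is the difference quotient
at `0` of `t/(eᵗ - 1) = ∑ Bₙ tⁿ/n!`, a power series of radius at least `1` because `|Bₙ| ≤ n!`.
So `φ⁽ᵏ⁾` is continuous at `0`, with value `k! B_{k+1}/(k+1)! = B_{k+1}/(k+1)`, and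
`(-1)ᵏ B_{k+1}/(k+1) = ζ(-k)`.
-/

open Finset Filter Topology Set FormalMultilinearSeries
open scoped Nat

theorem sum_descFactorial_le {n m : ℕ} (hm : m ≤ n) :
    ∑ k ∈ range m, (n + 1).descFactorial k ≤ (n + 1).descFactorial m := by
  induction m with
  | zero => simp
  | succ m ih =>
    rw [sum_range_succ, Nat.descFactorial_succ]
    have h2 : 2 ≤ n + 1 - m := by omega
    nlinarith [ih (by omega)]

theorem sum_choose_mul_factorial_le (n : ℕ) :
    ∑ k ∈ range n, (n + 1).choose k * k ! ≤ (n + 1)! := by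
  have h : (n + 1).descFactorial n = (n + 1)! := by
    simpa using Nat.factorial_mul_descFactorial (Nat.le_succ n)
  rw [← h]
  simpa only [Nat.descFactorial_eq_factorial_mul_choose, mul_comm] using
    sum_descFactorial_le (le_refl n)

theorem abs_bernoulli_le_factorial (n : ℕ) : |(bernoulli n : ℝ)| ≤ n ! := by
  induction n using Nat.strong_induction_on with
  | _ n ih =>
  rcases n.eq_zero_or_pos with rfl | hn
  · simp
  have hrec : ∑ k ∈ range n, ((n + 1).choose k : ℝ) * bernoulli k
      = -(((n : ℝ) + 1) * bernoulli n) := by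
    have h := congrArg (Rat.cast : ℚ → ℝ) (sum_bernoulli (n + 1))
    rw [if_neg (by omega), sum_range_succ, Nat.choose_succ_self_right] at h
    push_cast at h
    linarith
  refine le_of_mul_le_mul_left ?_ (by positivity : (0 : ℝ) < n + 1)
  calc ((n : ℝ) + 1) * |(bernoulli n : ℝ)|
        = |∑ k ∈ range n, ((n + 1).choose k : ℝ) * bernoulli k| := by
          rw [hrec, abs_neg, abs_mul, abs_of_pos (by positivity : (0 : ℝ) < n + 1)]
    _ ≤ ∑ k ∈ range n, ((n + 1).choose k * k ! : ℝ) := by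
          refine (abs_sum_le_sum_abs _ _).trans (sum_le_sum fun k hk => ?_)
          rw [abs_mul, Nat.abs_cast]
          exact mul_le_mul_of_nonneg_left (ih k (mem_range.mp hk)) (by positivity)
    _ ≤ (n + 1)! := by exact_mod_cast sum_choose_mul_factorial_le n
    _ = (n + 1) * n ! := by push_cast [Nat.factorial_succ]; ring

theorem sum_antidiagonal_bernoulli_div_factorial_div_factorial_succ (n : ℕ) :
    ∑ kl ∈ antidiagonal n, (bernoulli kl.1 / kl.1 ! / (kl.2 + 1)! : ℝ)
      = if n = 0 then 1 else 0 := by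
  have h := congrArg (Rat.cast : ℚ → ℝ) (bernoulli_spec' n)
  push_cast at h
  calc _ = (∑ kl ∈ antidiagonal n, ((kl.1 + kl.2).choose kl.2 : ℝ) / (kl.2 + 1)
          * bernoulli kl.1) / n ! := by
        rw [sum_div]
        refine sum_congr rfl fun kl hkl => ?_
        rw [← mem_antidiagonal.mp hkl]
        have hc : ((kl.1 + kl.2).choose kl.2 * kl.1 ! * kl.2 ! : ℝ) = (kl.1 + kl.2)! := by
          exact_mod_cast Nat.add_choose_mul_factorial_mul_factorial kl.1 kl.2
        have hpos : ((kl.1 + kl.2).choose kl.2 : ℝ) ≠ 0 := by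
          exact_mod_cast (Nat.choose_pos (Nat.le_add_left _ _)).ne'
        rw [← hc, Nat.factorial_succ]
        push_cast
        field_simp
    _ = if n = 0 then 1 else 0 := by
        rw [h]
        split_ifs with hn <;> simp [hn]

theorem Set.EqOn.iteratedDeriv_of_hasDerivAt {𝕜 F : Type*} [NontriviallyNormedField 𝕜]
    [NormedAddCommGroup F] [NormedSpace 𝕜 F] {s : Set 𝕜} (hs : IsOpen s) {g : 𝕜 → F}
    {f : ℕ → 𝕜 → F} (hg : EqOn g (f 0) s) (hf : ∀ n, ∀ x ∈ s, HasDerivAt (f n) (f (n + 1) x) x)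
    (n : ℕ) : EqOn (iteratedDeriv n g) (f n) s := by
  induction n with
  | zero => simpa using hg
  | succ n ih =>
    intro x hx
    rw [iteratedDeriv_succ]
    exact ((hf n x hx).congr_of_eventuallyEq (ih.eventuallyEq_of_mem (hs.mem_nhds hx))).deriv

theorem HasFPowerSeriesAt.iteratedDeriv_eq_factorial_smul_coeff {𝕜 F : Type*}
    [NontriviallyNormedField 𝕜] [NormedAddCommGroup F] [NormedSpace 𝕜 F] [CompleteSpace F]
    {p : FormalMultilinearSeries 𝕜 𝕜 F} {f : 𝕜 → F} {x : 𝕜} (h : HasFPowerSeriesAt f p x)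
    (n : ℕ) : iteratedDeriv n f x = n ! • p.coeff n := by
  obtain ⟨r, hr⟩ := h
  rw [iteratedDeriv_eq_iteratedFDeriv, ← hr.factorial_smul 1 n, apply_eq_pow_smul_coeff, one_pow,
    one_smul]

theorem Real.hasSum_pow_succ_div_factorial_succ (t : ℝ) :
    HasSum (fun n => t ^ (n + 1) / (n + 1)!) (Real.exp t - 1) := by
  have h := (NormedSpace.exp_series_hasSum_exp' (𝕂 := ℝ) t)
  rw [← Real.exp_eq_exp_ℝ, ← hasSum_nat_add_iff' 1] at h
  simpa [div_eq_inv_mul] using h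

noncomputable def bernoulliSeries : FormalMultilinearSeries ℝ ℝ ℝ :=
  ofScalars ℝ fun n => (bernoulli n / n ! : ℝ)

theorem bernoulliSeries_apply (n : ℕ) (t : ℝ) :
    bernoulliSeries n (fun _ => t) = bernoulli n / n ! * t ^ n := by
  rw [bernoulliSeries, ofScalars_apply_eq, smul_eq_mul, mul_comm]

theorem one_le_radius_bernoulliSeries : 1 ≤ bernoulliSeries.radius := by
  have h := bernoulliSeries.le_radius_of_bound 1 (r := 1) fun n => by
    rw [NNReal.coe_one, one_pow, mul_one, bernoulliSeries, ofScalars_norm, Real.norm_eq_abs,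
      abs_div, Nat.abs_cast, div_le_one (by positivity)]
    exact abs_bernoulli_le_factorial n
  simpa using h

theorem bernoulliSeries_sum_mul_exp_sub_one {t : ℝ} (ht : |t| < 1) :
    bernoulliSeries.sum t * (Real.exp t - 1) = t := by
  set a : ℕ → ℝ := fun n => bernoulli n / n ! * t ^ n
  set b : ℕ → ℝ := fun n => t ^ n / (n + 1)!
  have ha : Summable fun n => ‖a n‖ := by
    have hmem : t ∈ Metric.eball (0 : ℝ) bernoulliSeries.radius :=
      mem_eball_zero_iff.mpr (lt_of_lt_of_le (by simpa [Real.enorm_eq_ofReal_abs] using ht)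
        one_le_radius_bernoulliSeries)
    simpa only [bernoulliSeries_apply] using bernoulliSeries.summable_norm_apply hmem
  have hb : Summable fun n => ‖b n‖ := by
    refine (Real.summable_pow_div_factorial |t|).of_nonneg_of_le (fun _ => norm_nonneg _)
      fun n => ?_
    rw [Real.norm_eq_abs, abs_div, abs_pow, Nat.abs_cast]
    exact div_le_div_of_nonneg_left (by positivity) (by positivity)
      (by exact_mod_cast Nat.factorial_le (Nat.le_succ n))
  have hexp : t * ∑' n, b n = Real.exp t - 1 :=
    ((hb.of_norm.hasSum.mul_left t).unique (by
      simpa only [b, pow_succ', mul_div_assoc] using Real.hasSum_pow_succ_div_factorial_succ t))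
  have hprod : (∑' n, a n) * ∑' n, b n = 1 := by
    have hconv : ∀ n, ∑ kl ∈ antidiagonal n, a kl.1 * b kl.2 = if n = 0 then 1 else 0 := by
      intro n
      calc _ = t ^ n * ∑ kl ∈ antidiagonal n, (bernoulli kl.1 / kl.1 ! / (kl.2 + 1)! : ℝ) := by
            rw [mul_sum]
            refine sum_congr rfl fun kl hkl => ?_
            rw [← mem_antidiagonal.mp hkl, pow_add]
            ring
        _ = _ := by
            rw [sum_antidiagonal_bernoulli_div_factorial_div_factorial_succ]
            split_ifs with hn <;> simp [hn]
    rw [tsum_mul_tsum_eq_tsum_sum_antidiagonal_of_summable_norm ha hb, tsum_congr hconv,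
      tsum_ite_eq]
  rw [← hexp, FormalMultilinearSeries.sum]
  simp only [bernoulliSeries_apply]
  linear_combination t * hprod

theorem dslope_bernoulliSeries_sum {t : ℝ} (ht0 : t ≠ 0) (ht : |t| < 1) :
    dslope bernoulliSeries.sum 0 t = 1 / (Real.exp t - 1) - 1 / t := by
  have hsum0 : bernoulliSeries.sum 0 = 1 := by
    change ofScalarsSum _ 0 = 1
    simp [ofScalarsSum_zero]
  have hexp : Real.exp t - 1 ≠ 0 := sub_ne_zero.mpr (mt (Real.exp_eq_one_iff t).mp ht0)
  have h := bernoulliSeries_sum_mul_exp_sub_one ht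
  rw [dslope_of_ne _ ht0, slope_def_field, hsum0, sub_zero]
  field_simp
  linear_combination h

theorem hasFPowerSeriesAt_dslope_bernoulliSeries :
    HasFPowerSeriesAt (dslope bernoulliSeries.sum 0) bernoulliSeries.fslope 0 :=
  (bernoulliSeries.hasFPowerSeriesOnBall (zero_lt_one.trans_le
    one_le_radius_bernoulliSeries)).hasFPowerSeriesAt.has_fpower_series_dslope_fslope

theorem iteratedDeriv_dslope_bernoulliSeries_zero (k : ℕ) :
    iteratedDeriv k (dslope bernoulliSeries.sum 0) 0 = bernoulli (k + 1) / (k + 1) := by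
  rw [hasFPowerSeriesAt_dslope_bernoulliSeries.iteratedDeriv_eq_factorial_smul_coeff, coeff_fslope,
    bernoulliSeries, coeff_ofScalars, nsmul_eq_mul, Nat.factorial_succ]
  push_cast
  field_simp

theorem continuousAt_iteratedDeriv_dslope_bernoulliSeries (k : ℕ) :
    ContinuousAt (iteratedDeriv k (dslope bernoulliSeries.sum 0)) 0 := by
  rw [iteratedDeriv_eq_iterate]
  exact (hasFPowerSeriesAt_dslope_bernoulliSeries.analyticAt.iterated_deriv k).continuousAt

noncomputable def polylogNeg (k : ℕ) (z : ℝ) : ℝ := ∑' r : ℕ, (r : ℝ) ^ k * z ^ r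

theorem polylogNeg_zero {z : ℝ} (h0 : 0 ≤ z) (h1 : z < 1) : polylogNeg 0 z = (1 - z)⁻¹ := by
  simpa [polylogNeg] using tsum_geometric_of_lt_one h0 h1

theorem hasDerivAt_polylogNeg_exp_neg (j : ℕ) {t : ℝ} (ht : 0 < t) :
    HasDerivAt (fun s => polylogNeg j (Real.exp (-s))) (-polylogNeg (j + 1) (Real.exp (-t))) t := by
  have hsummable : ∀ i, ∀ {u : ℝ}, 0 < u → Summable fun r : ℕ => (r : ℝ) ^ i * Real.exp (-u) ^ r :=
    fun i u hu => summable_pow_mul_geometric_of_norm_lt_one i (by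
      rw [Real.norm_of_nonneg (Real.exp_pos _).le, Real.exp_lt_one_iff]; linarith)
  have hderiv : ∀ (r : ℕ) (s : ℝ), HasDerivAt (fun s => (r : ℝ) ^ j * Real.exp (-s) ^ r)
      (-((r : ℝ) ^ (j + 1) * Real.exp (-s) ^ r)) s := by
    intro r s
    simp_rw [← Real.exp_nat_mul]
    refine (((hasDerivAt_neg s).const_mul (r : ℝ)).exp.const_mul ((r : ℝ) ^ j)).congr_deriv ?_
    ring
  have hbound : ∀ (r : ℕ), ∀ s ∈ Ioi (t / 2),
      ‖-((r : ℝ) ^ (j + 1) * Real.exp (-s) ^ r)‖ ≤ (r : ℝ) ^ (j + 1) * Real.exp (-(t / 2)) ^ r := by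
    intro r s hs
    rw [norm_neg, Real.norm_of_nonneg (by positivity)]
    gcongr
    exact (Set.mem_Ioi.mp hs).le
  have h := hasDerivAt_tsum_of_isPreconnected (hsummable (j + 1) (half_pos ht)) isOpen_Ioi
    isPreconnected_Ioi (fun r s _ => hderiv r s) hbound (half_lt_self ht) (hsummable j ht)
    (half_lt_self ht)
  simpa only [polylogNeg, tsum_neg] using h

theorem hasDerivAt_factorial_div_pow (j : ℕ) {t : ℝ} (ht : t ≠ 0) :
    HasDerivAt (fun s : ℝ => j ! / s ^ (j + 1)) (-((j + 1)! / t ^ (j + 2))) t := by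
  have h := ((hasDerivAt_pow (j + 1) t).fun_inv (pow_ne_zero _ ht)).const_mul (j ! : ℝ)
  simp only [← div_eq_mul_inv] at h
  refine h.congr_deriv ?_
  rw [Nat.add_sub_cancel, Nat.factorial_succ]
  push_cast
  field_simp
  ring

noncomputable def polylogNegSubPole (j : ℕ) (t : ℝ) : ℝ :=
  (-1) ^ j * (polylogNeg j (Real.exp (-t)) - j ! / t ^ (j + 1))

theorem hasDerivAt_polylogNegSubPole (j : ℕ) {t : ℝ} (ht : 0 < t) :
    HasDerivAt (polylogNegSubPole j) (polylogNegSubPole (j + 1) t) t := by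
  refine (((hasDerivAt_polylogNeg_exp_neg j ht).sub
    (hasDerivAt_factorial_div_pow j ht.ne')).const_mul ((-1 : ℝ) ^ j)).congr_deriv ?_
  rw [polylogNegSubPole, pow_succ]
  ring

theorem one_add_dslope_bernoulliSeries_eqOn :
    EqOn (fun t => 1 + dslope bernoulliSeries.sum 0 t) (polylogNegSubPole 0) (Ioo 0 1) := by
  rintro t ⟨ht0, ht1⟩
  dsimp only
  rw [dslope_bernoulliSeries_sum ht0.ne' (by rwa [abs_of_pos ht0]), polylogNegSubPole,
    polylogNeg_zero (Real.exp_pos _).le (Real.exp_lt_one_iff.mpr (by linarith)), Real.exp_neg]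
  have hexp : Real.exp t - 1 ≠ 0 := sub_ne_zero.mpr (mt (Real.exp_eq_one_iff t).mp ht0.ne')
  field_simp
  ring

theorem iteratedDeriv_dslope_bernoulliSeries_eqOn {k : ℕ} (hk : 1 ≤ k) :
    EqOn (iteratedDeriv k (dslope bernoulliSeries.sum 0)) (polylogNegSubPole k) (Ioo 0 1) := by
  intro t ht
  rw [← iteratedDeriv_const_add hk 1]
  exact one_add_dslope_bernoulliSeries_eqOn.iteratedDeriv_of_hasDerivAt isOpen_Ioo
    (fun n s hs => hasDerivAt_polylogNegSubPole n hs.1) k ht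

theorem tendsto_log_one_div_nhdsWithin_Ioo :
    Tendsto (fun z : ℝ => Real.log (1 / z)) (𝓝[Ioo 0 1] 1) (𝓝[Ioo 0 1] 0) := by
  refine tendsto_nhdsWithin_iff.mpr ⟨?_, ?_⟩
  · have h : ContinuousAt (fun z : ℝ => Real.log (1 / z)) 1 := by fun_prop (disch := norm_num)
    simpa using h.tendsto.mono_left nhdsWithin_le_nhds
  · have hnhds : Ioo (Real.exp (-1)) 2 ∈ 𝓝 (1 : ℝ) :=
      Ioo_mem_nhds (Real.exp_lt_one_iff.mpr (by norm_num)) one_lt_two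
    filter_upwards [self_mem_nhdsWithin, nhdsWithin_le_nhds hnhds] with z hz hz'
    rw [one_div, Real.log_inv]
    exact ⟨neg_pos.mpr (Real.log_neg hz.1 hz.2),
      neg_lt.mpr ((Real.lt_log_iff_exp_lt hz.1).mpr hz'.1)⟩

/-- As `z → 1⁻` (through `0 < z < 1`), the generating function `f_k(z) = ∑_{r≥0} r^k z^r`
satisfies `f_k(z) - k!/(log(1/z))^{k+1} → ζ(-k)`, the value of the (analytically continued)
Riemann zeta function at `-k`. -/
theorem polyLog_sub_mainTerm_tendsto_zeta_neg (k : ℕ) (hk : 1 ≤ k)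
    (ζ : ℝ) (hζ : (ζ : ℂ) = riemannZeta (-(k : ℂ))) :
    Filter.Tendsto
      (fun z : ℝ => (∑' r : ℕ, (r : ℝ) ^ k * z ^ r)
        - (k.factorial : ℝ) / (Real.log (1 / z)) ^ (k + 1))
      (nhdsWithin 1 (Set.Ioo 0 1)) (nhds ζ) := by
  have hζ' : ζ = (-1) ^ k * iteratedDeriv k (dslope bernoulliSeries.sum 0) 0 := by
    rw [iteratedDeriv_dslope_bernoulliSeries_zero, ← mul_div_assoc]
    exact_mod_cast hζ.trans (riemannZeta_neg_nat_eq_bernoulli k)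
  rw [hζ']
  refine (((continuousAt_iteratedDeriv_dslope_bernoulliSeries k).tendsto.comp
    (tendsto_log_one_div_nhdsWithin_Ioo.mono_right nhdsWithin_le_nhds)).const_mul _).congr' ?_
  filter_upwards [tendsto_log_one_div_nhdsWithin_Ioo self_mem_nhdsWithin, self_mem_nhdsWithin]
    with z ht hz
  rw [Function.comp_apply, iteratedDeriv_dslope_bernoulliSeries_eqOn hk ht, polylogNegSubPole,
    ← mul_assoc, ← pow_add, Even.neg_one_pow ⟨k, rfl⟩, one_mul]
  dsimp only
  rw [one_div, Real.log_inv, neg_neg, Real.exp_log hz.1]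
  rfl
end
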